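/- arXiv:2005.12122 — 5 statements merged into one kernel-verified Lean document; each statement's English description precedes it below -/
import Mathlib

section
/- Let (𝒜_i)_{i∈I} be a family of nonempty subsets of a set 𝒜 carrying a reflexive symmetric relation ∼, together with a function |·|: I → ℕ, and suppose the family thinly splinters. Then there is a set N ⊆ 𝒜 which meets every 𝒜_i and is nested, i.e. n_1 ∼ n_2 for all n_1,n_2 ∈ N. Moreover N can be chosen invariantly under isomorphisms: there is a choice of such a set N((𝒜_i)_{i∈I}) for every thinly splintering family such that whenever φ is a bijection 𝒜 → 𝒜' with a ∼ b ⟺ φ(a) ∼' φ(b), one has N((φ(𝒜_i))_{i∈I}) = φ(N((𝒜_i)_{i∈I})). -/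
universe u v

/-- `c` is a corner of `a` and `b` (w.r.t. the nestedness relation `sim`): every
element crossing `c` crosses `a` or `b`. -/
def IsCornerT {A : Type u} (sim : A → A → Prop) (a b c : A) : Prop :=
  ∀ d : A, ¬ sim c d → (¬ sim a d ∨ ¬ sim b d)

/-- The `k`-crossing number of `a`: the number (in `ℕ∞`) of elements of the sets
`Ai i` with `ord i = k` that cross `a`. -/
noncomputable def crossNum {A : Type u} {I : Type v} (sim : A → A → Prop)
    (Ai : I → Set A) (ord : I → ℕ) (k : ℕ) (a : A) : ℕ∞ :=
  {b : A | (∃ i, ord i = k ∧ b ∈ Ai i) ∧ ¬ sim a b}.encard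

/-- The family `(Ai i)` thinly splinters with respect to `sim` and `ord`. -/
def ThinlySplinters {A : Type u} {I : Type v} (sim : A → A → Prop)
    (Ai : I → Set A) (ord : I → ℕ) : Prop :=
  (∀ i : I, ∀ a ∈ Ai i, ∀ k : ℕ, k ≤ ord i → crossNum sim Ai ord k a < ⊤) ∧
  (∀ i j : I, ∀ ai ∈ Ai i, ∀ aj ∈ Ai j, ord i < ord j → ¬ sim ai aj →
    ∃ c ∈ Ai j, IsCornerT sim ai aj c ∧ sim c ai) ∧
  (∀ (i j : I) (k : ℕ), ∀ ai ∈ Ai i, ∀ aj ∈ Ai j,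
    ord i = k → ord j = k → ¬ sim ai aj →
    (∃ c ∈ Ai i, IsCornerT sim ai aj c ∧
      crossNum sim Ai ord k c < crossNum sim Ai ord k ai) ∨
    (∃ c ∈ Ai j, IsCornerT sim ai aj c ∧
      crossNum sim Ai ord k c < crossNum sim Ai ord k aj))

/-!
Build `N` level by level. At level `k`, add every element of every `𝒜_i` with `|i| = k` that is
nested with everything chosen at lower levels and has minimal `k`-crossing number among such
elements of `𝒜_i`. Such elements exist: an element of `𝒜_i` crossing the fewest (finitely many,
by thinness) previously chosen elements crosses none, since a crossing with `m` of lower level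
could be traded for a corner nested with `m`. Two elements chosen at the same level are nested,
as otherwise a corner with smaller crossing number would contradict minimality. The construction
involves no arbitrary choices, so it commutes with isomorphisms.
-/

theorem IsCornerT.sim_of_sim {A : Type u} {sim : A → A → Prop} {a b c d : A}
    (hc : IsCornerT sim a b c) (ha : sim a d) (hb : sim b d) : sim c d := by
  by_contra hcd
  exact (hc d hcd).elim (· ha) (· hb)

namespace ThinlySplinters

variable {A : Type u} {I : Type v}

def nestedPart (sim : A → A → Prop) (Ai : I → Set A) (S : Set A) (i : I) : Set A :=
  {a ∈ Ai i | ∀ n ∈ S, sim a n}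

noncomputable def minimalChoices (sim : A → A → Prop) (Ai : I → Set A) (ord : I → ℕ)
    (S : Set A) (k : ℕ) : Set A :=
  {a | ∃ i, ord i = k ∧ a ∈ nestedPart sim Ai S i ∧
    ∀ b ∈ nestedPart sim Ai S i, crossNum sim Ai ord k a ≤ crossNum sim Ai ord k b}

/-- `chosenBelow sim Ai ord k` collects the choices made at levels `< k`. -/
noncomputable def chosenBelow (sim : A → A → Prop) (Ai : I → Set A) (ord : I → ℕ) :
    ℕ → Set A
  | 0 => ∅
  | k + 1 => chosenBelow sim Ai ord k ∪ minimalChoices sim Ai ord (chosenBelow sim Ai ord k) k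

noncomputable def nestedSet (sim : A → A → Prop) (Ai : I → Set A) (ord : I → ℕ) : Set A :=
  ⋃ k, chosenBelow sim Ai ord k

variable {sim : A → A → Prop} {Ai : I → Set A} {ord : I → ℕ}

theorem _root_.IsCornerT.mem_nestedPart {S : Set A} {i i' j' : I} {a b c : A}
    (hc : IsCornerT sim a b c) (hcA : c ∈ Ai i) (ha : a ∈ nestedPart sim Ai S i')
    (hb : b ∈ nestedPart sim Ai S j') : c ∈ nestedPart sim Ai S i :=
  ⟨hcA, fun n hn => hc.sim_of_sim (ha.2 n hn) (hb.2 n hn)⟩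

theorem finite_crossing_lower (h : ThinlySplinters sim Ai ord) {i : I} {a : A}
    (ha : a ∈ Ai i) : {b | (∃ j, ord j < ord i ∧ b ∈ Ai j) ∧ ¬ sim a b}.Finite := by
  refine ((Finset.range (ord i)).finite_toSet.biUnion fun k hk =>
    Set.encard_lt_top_iff.mp (h.1 i a ha k (Finset.mem_range.mp hk).le)).subset ?_
  rintro b ⟨⟨j, hj, hb⟩, hab⟩
  exact Set.mem_biUnion (Finset.mem_range.mpr hj) ⟨⟨j, rfl, hb⟩, hab⟩

theorem nestedPart_nonempty (hsymm : Symmetric sim) (h : ThinlySplinters sim Ai ord)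
    {S : Set A} {i : I} (hS : S ⊆ {b | ∃ j, ord j < ord i ∧ b ∈ Ai j})
    (hSnested : ∀ m ∈ S, ∀ n ∈ S, sim m n) (hi : (Ai i).Nonempty) :
    (nestedPart sim Ai S i).Nonempty := by
  let crossings (a : A) : Set A := {m ∈ S | ¬ sim a m}
  obtain ⟨a, ha, hmin⟩ : ∃ a ∈ Ai i, ∀ b ∈ Ai i, (crossings a).encard ≤ (crossings b).encard :=
    let f (a : A) := (crossings a).encard
    ⟨_, Function.argminOn_mem f _ hi, fun b hb => Function.argminOn_le f _ hb⟩
  refine ⟨a, ha, fun m hm => by_contra fun hma => ?_⟩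
  obtain ⟨j, hj, hmA⟩ := hS hm
  obtain ⟨c, hcA, hcorner, hcm⟩ := h.2.1 j i m hmA a ha hj fun ham => hma (hsymm ham)
  have hfin : (crossings a).Finite :=
    (h.finite_crossing_lower ha).subset fun p ⟨hp, hap⟩ => ⟨hS hp, hap⟩
  have hfewer : crossings c ⊂ crossings a := by
    refine Set.ssubset_iff_subset_ne.mpr ⟨fun p ⟨hp, hcp⟩ => ⟨hp, ?_⟩, fun heq => ?_⟩
    · exact (hcorner p hcp).resolve_left (not_not.mpr (hSnested m hm p hp))
    · exact (heq ▸ ⟨hm, hma⟩ : m ∈ crossings c).2 hcm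
  exact (hfin.subset hfewer.subset).encard_lt_encard hfewer |>.not_ge (hmin c hcA)

theorem minimalChoices_nested (h : ThinlySplinters sim Ai ord) (S : Set A) (k : ℕ) :
    ∀ a ∈ minimalChoices sim Ai ord S k, ∀ b ∈ minimalChoices sim Ai ord S k, sim a b := by
  rintro a ⟨i, hi, haS, hamin⟩ b ⟨j, hj, hbS, hbmin⟩
  by_contra hab
  rcases h.2.2 i j k a haS.1 b hbS.1 hi hj hab with
    ⟨c, hcA, hcorner, hlt⟩ | ⟨c, hcA, hcorner, hlt⟩
  · exact (hamin c (hcorner.mem_nestedPart hcA haS hbS)).not_gt hlt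
  · exact (hbmin c (hcorner.mem_nestedPart hcA haS hbS)).not_gt hlt

theorem chosenBelow_subset (k : ℕ) :
    chosenBelow sim Ai ord k ⊆ {b | ∃ j, ord j < k ∧ b ∈ Ai j} := by
  induction k with
  | zero => exact Set.empty_subset _
  | succ k ih =>
    rintro a (ha | ⟨i, hi, ha, -⟩)
    · obtain ⟨j, hj, haj⟩ := ih ha
      exact ⟨j, by omega, haj⟩
    · exact ⟨i, by omega, ha.1⟩

theorem chosenBelow_mono : Monotone (chosenBelow sim Ai ord) :=
  monotone_nat_of_le_succ fun _ => Set.subset_union_left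

theorem chosenBelow_nested (hsymm : Symmetric sim) (h : ThinlySplinters sim Ai ord) (k : ℕ) :
    ∀ a ∈ chosenBelow sim Ai ord k, ∀ b ∈ chosenBelow sim Ai ord k, sim a b := by
  induction k with
  | zero => exact fun a ha => ha.elim
  | succ k ih =>
    rintro a (ha | ha) b (hb | hb)
    · exact ih a ha b hb
    · obtain ⟨_, _, hbS, _⟩ := hb
      exact hsymm (hbS.2 a ha)
    · obtain ⟨_, _, haS, _⟩ := ha
      exact haS.2 b hb
    · exact h.minimalChoices_nested _ k a ha b hb

theorem nestedSet_nested (hsymm : Symmetric sim) (h : ThinlySplinters sim Ai ord) :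
    ∀ a ∈ nestedSet sim Ai ord, ∀ b ∈ nestedSet sim Ai ord, sim a b := by
  intro a ha b hb
  obtain ⟨k, hak⟩ := Set.mem_iUnion.mp ha
  obtain ⟨l, hbl⟩ := Set.mem_iUnion.mp hb
  exact h.chosenBelow_nested hsymm (max k l) a (chosenBelow_mono (le_max_left k l) hak)
    b (chosenBelow_mono (le_max_right k l) hbl)

theorem nestedSet_meets (hsymm : Symmetric sim) (h : ThinlySplinters sim Ai ord) {i : I}
    (hi : (Ai i).Nonempty) : ∃ a ∈ Ai i, a ∈ nestedSet sim Ai ord := by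
  let B := nestedPart sim Ai (chosenBelow sim Ai ord (ord i)) i
  have hB : B.Nonempty := h.nestedPart_nonempty hsymm (chosenBelow_subset _)
    (h.chosenBelow_nested hsymm _) hi
  let f (a : A) := crossNum sim Ai ord (ord i) a
  have hmin : Function.argminOn f B hB ∈ minimalChoices sim Ai ord _ (ord i) :=
    ⟨i, rfl, Function.argminOn_mem f B hB, fun b hb => Function.argminOn_le f B hb⟩
  exact ⟨_, (Function.argminOn_mem f B hB).1, Set.mem_iUnion.mpr ⟨ord i + 1, Or.inr hmin⟩⟩

section Invariance

variable {A' : Type u} {sim' : A' → A' → Prop} (φ : A ≃ A')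
  (hφ : ∀ a b : A, sim a b ↔ sim' (φ a) (φ b))
include hφ

theorem crossNum_image (k : ℕ) (a : A) :
    crossNum sim' (fun i => φ '' Ai i) ord k (φ a) = crossNum sim Ai ord k a := by
  rw [crossNum, crossNum, ← φ.injective.encard_image]
  congr 1
  ext b'
  obtain ⟨b, rfl⟩ := φ.surjective b'
  simp [hφ]

theorem nestedPart_image (S : Set A) (i : I) :
    nestedPart sim' (fun i => φ '' Ai i) (φ '' S) i = φ '' nestedPart sim Ai S i := by
  ext a'
  obtain ⟨a, rfl⟩ := φ.surjective a'
  simp only [nestedPart, Set.mem_ofPred_eq, φ.injective.mem_set_image, Set.forall_mem_image, hφ]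

theorem minimalChoices_image (S : Set A) (k : ℕ) :
    minimalChoices sim' (fun i => φ '' Ai i) ord (φ '' S) k =
      φ '' minimalChoices sim Ai ord S k := by
  ext a'
  obtain ⟨a, rfl⟩ := φ.surjective a'
  simp only [minimalChoices, Set.mem_ofPred_eq, nestedPart_image φ hφ, φ.injective.mem_set_image,
    Set.forall_mem_image, crossNum_image φ hφ]

theorem chosenBelow_image (k : ℕ) :
    chosenBelow sim' (fun i => φ '' Ai i) ord k = φ '' chosenBelow sim Ai ord k := by
  induction k with
  | zero => exact (Set.image_empty _).symm
  | succ k ih =>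
    rw [chosenBelow, chosenBelow, ih, minimalChoices_image φ hφ, Set.image_union]

theorem nestedSet_image :
    nestedSet sim' (fun i => φ '' Ai i) ord = φ '' nestedSet sim Ai ord := by
  rw [nestedSet, nestedSet, Set.image_iUnion]
  exact Set.iUnion_congr (chosenBelow_image φ hφ)

end Invariance

end ThinlySplinters

/-- the thin splinter lemma, with a canonical (isomorphism-invariant)
choice of the nested set `N`. -/
theorem stmt1 :
    ∃ N : ∀ (A : Type u) (sim : A → A → Prop) (I : Type v)
      (Ai : I → Set A) (ord : I → ℕ), Set A,
      (∀ (A : Type u) (sim : A → A → Prop) (I : Type v)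
          (Ai : I → Set A) (ord : I → ℕ),
        Reflexive sim → Symmetric sim → (∀ i, (Ai i).Nonempty) →
        ThinlySplinters sim Ai ord →
        (∀ i, ∃ a ∈ Ai i, a ∈ N A sim I Ai ord) ∧
        (∀ a ∈ N A sim I Ai ord, ∀ b ∈ N A sim I Ai ord, sim a b)) ∧
      (∀ (A A' : Type u) (sim : A → A → Prop) (sim' : A' → A' → Prop) (I : Type v)
          (Ai : I → Set A) (ord : I → ℕ) (φ : A ≃ A'),
        (∀ a b : A, sim a b ↔ sim' (φ a) (φ b)) →
        Reflexive sim → Symmetric sim → (∀ i, (Ai i).Nonempty) →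
        ThinlySplinters sim Ai ord →
        N A' sim' I (fun i => ⇑φ '' Ai i) ord = ⇑φ '' N A sim I Ai ord) := by
  refine ⟨fun A sim I Ai ord => ThinlySplinters.nestedSet sim Ai ord, ?_, ?_⟩
  · intro A sim I Ai ord _ hsymm hne h
    exact ⟨fun i => h.nestedSet_meets hsymm (hne i), h.nestedSet_nested hsymm⟩
  · intro A A' sim sim' I Ai ord φ hφ _ _ _ _
    exact ThinlySplinters.nestedSet_image φ hφ
end

section
/- Let U be the inverse limit of an inverse system (U_p)_{p∈P} of finite universes of separations over a directed poset P, and let ℬ be a (possibly infinite) family of nonempty closed subsets of U, each closed under the involution. If ℬ splinters, then there is a closed nested set N ⊆ U containing at least one element from each member of ℬ. -/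
/-- The inverse limit of an inverse system over a poset `P`, as a subtype of the
product (the compatibility maps are given for all pairs `p < q`). -/
abbrev InvLim {P : Type} [PartialOrder P] (Up : P → Type)
    (f : ∀ p q : P, p < q → Up q → Up p) : Type :=
  {x : ∀ p, Up p // ∀ (p q : P) (h : p < q), f p q h (x q) = x p}

section

variable {P : Type} [PartialOrder P] {Up : P → Type} [∀ p, Lattice (Up p)]
  {f : ∀ p q : P, p < q → Up q → Up p}

/-- Coordinatewise partial order on the inverse limit. -/
def ILle (x y : InvLim Up f) : Prop := ∀ p, x.1 p ≤ y.1 p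

/-- Coordinatewise involution on the inverse limit. -/
def ILstar (star : ∀ p, Up p → Up p)
    (hfstar : ∀ (p q : P) (h : p < q) (a : Up q), f p q h (star q a) = star p (f p q h a))
    (x : InvLim Up f) : InvLim Up f :=
  ⟨fun p => star p (x.1 p), fun p q h => by rw [hfstar p q h, x.2 p q h]⟩

/-- Coordinatewise join on the inverse limit. -/
def ILsup (hfsup : ∀ (p q : P) (h : p < q) (a b : Up q),
      f p q h (a ⊔ b) = f p q h a ⊔ f p q h b)
    (x y : InvLim Up f) : InvLim Up f :=
  ⟨fun p => x.1 p ⊔ y.1 p, fun p q h => by rw [hfsup p q h, x.2 p q h, y.2 p q h]⟩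

/-- Two elements of the inverse limit are nested if suitable orientations are
comparable in the coordinatewise order. -/
def ILnested (star : ∀ p, Up p → Up p)
    (hfstar : ∀ (p q : P) (h : p < q) (a : Up q), f p q h (star q a) = star p (f p q h a))
    (x y : InvLim Up f) : Prop :=
  ∃ x' ∈ ({x, ILstar star hfstar x} : Set (InvLim Up f)),
    ∃ y' ∈ ({y, ILstar star hfstar y} : Set (InvLim Up f)), ILle x' y'

/-- `c` is a corner separation of `x` and `y` in the inverse limit. -/
def ILcorner (star : ∀ p, Up p → Up p)
    (hfstar : ∀ (p q : P) (h : p < q) (a : Up q), f p q h (star q a) = star p (f p q h a))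
    (hfsup : ∀ (p q : P) (h : p < q) (a b : Up q),
      f p q h (a ⊔ b) = f p q h a ⊔ f p q h b)
    (x y c : InvLim Up f) : Prop :=
  ∃ x' ∈ ({x, ILstar star hfstar x} : Set (InvLim Up f)),
    ∃ y' ∈ ({y, ILstar star hfstar y} : Set (InvLim Up f)),
      c = ILsup hfsup x' y' ∨ c = ILstar star hfstar (ILsup hfsup x' y')

end


section Core

variable {V : Type} (le : V → V → Prop) (sup : V → V → V) (st : V → V)

/-- The two orientations of a separation. -/
def orient (x : V) : Set V := {x, st x}

/-- Nestedness. -/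
def Nst (x y : V) : Prop := ∃ x' ∈ orient st x, ∃ y' ∈ orient st y, le x' y'

variable (hrefl : ∀ a, le a a) (htrans : ∀ a b c, le a b → le b c → le a c)
  (hsl : ∀ a b, le a (sup a b)) (hsr : ∀ a b, le b (sup a b))
  (hsup : ∀ a b c, le a c → le b c → le (sup a b) c)
  (hinv : ∀ a, st (st a) = a) (hanti : ∀ a b, le a b → le (st b) (st a))

variable {le sup st}

lemma mem_orient_iff {x x' : V} : x' ∈ orient st x ↔ x' = x ∨ x' = st x := by
  simp [orient]

lemma self_mem_orient (x : V) : x ∈ orient st x := Or.inl rfl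

include hinv

lemma st_mem_orient' {x x' : V} (h : x' ∈ orient st x) : st x' ∈ orient st x := by
  rcases mem_orient_iff.1 h with h | h <;> subst h
  · exact Or.inr rfl
  · exact Or.inl (hinv x)

lemma orient_cases {x x' y' : V} (h : x' ∈ orient st x) (h' : y' ∈ orient st x) :
    x' = y' ∨ x' = st y' := by
  rcases mem_orient_iff.1 h with h | h <;> rcases mem_orient_iff.1 h' with h' | h' <;>
    subst h <;> subst h' <;> simp [hinv] <;> tauto

omit hinv

include hrefl in
lemma nst_refl (x : V) : Nst le st x x :=
  ⟨x, self_mem_orient x, x, self_mem_orient x, hrefl x⟩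

include hinv hanti in
lemma nst_symm {x y : V} (h : Nst le st x y) : Nst le st y x := by
  obtain ⟨x', hx', y', hy', hle⟩ := h
  exact ⟨st y', st_mem_orient' hinv hy', st x', st_mem_orient' hinv hx', hanti _ _ hle⟩

include hinv in
lemma orient_st (x : V) : orient st (st x) = orient st x := by
  unfold orient
  rw [hinv, Set.pair_comm]

include hinv in
lemma nst_st_left {x y : V} (h : Nst le st x y) : Nst le st (st x) y := by
  obtain ⟨x', hx', y', hy', hle⟩ := h
  exact ⟨x', (orient_st hinv x) ▸ hx', y', hy', hle⟩

include hinv in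
lemma nst_st_right {x y : V} (h : Nst le st x y) : Nst le st x (st y) := by
  obtain ⟨x', hx', y', hy', hle⟩ := h
  exact ⟨x', hx', y', (orient_st hinv y) ▸ hy', hle⟩

include hsl in
/-- The corner `sup x' y'` is nested with `x`. -/
lemma nst_corner_left {x x' y' : V} (hx' : x' ∈ orient st x) :
    Nst le st x (sup x' y') :=
  ⟨x', hx', sup x' y', self_mem_orient _, hsl x' y'⟩

include hsr in
lemma nst_corner_right {y x' y' : V} (hy' : y' ∈ orient st y) :
    Nst le st y (sup x' y') :=
  ⟨y', hy', sup x' y', self_mem_orient _, hsr x' y'⟩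

include hinv hanti in
lemma nst_elim {t r r' : V} (h : Nst le st t r) (hr' : r' ∈ orient st r) :
    (∃ t' ∈ orient st t, le t' r') ∨ (∃ t' ∈ orient st t, le r' t') := by
  obtain ⟨t₀, ht₀, r₀, hr₀, hle⟩ := h
  rcases orient_cases hinv hr₀ hr' with h | h
  · exact Or.inl ⟨t₀, ht₀, h ▸ hle⟩
  · right
    refine ⟨st t₀, st_mem_orient' hinv ht₀, ?_⟩
    have := hanti _ _ (h ▸ hle)
    rwa [hinv] at this

include htrans hsl hsr hsup hinv hanti in
/-- Fish lemma: if `r` and `s` cross and `t` is nested with both, then `t` is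
nested with every corner of `r` and `s`. -/
lemma fish {t r s r' s' : V} (hcross : ¬ Nst le st r s)
    (h1 : Nst le st t r) (h2 : Nst le st t s)
    (hr' : r' ∈ orient st r) (hs' : s' ∈ orient st s) :
    Nst le st t (sup r' s') := by
  rcases nst_elim hinv hanti h1 hr' with ⟨t', ht', hle⟩ | ⟨t', ht', hle⟩
  · exact ⟨t', ht', sup r' s', self_mem_orient _, htrans _ _ _ hle (hsl r' s')⟩
  rcases nst_elim hinv hanti h2 hs' with ⟨t'', ht'', hle'⟩ | ⟨t'', ht'', hle'⟩
  · exact ⟨t'', ht'', sup r' s', self_mem_orient _, htrans _ _ _ hle' (hsr r' s')⟩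
  rcases orient_cases hinv ht' ht'' with h | h
  · subst h
    have : le (sup r' s') t' := hsup _ _ _ hle hle'
    exact ⟨st t', st_mem_orient' hinv ht', st (sup r' s'),
      st_mem_orient' hinv (self_mem_orient _), hanti _ _ this⟩
  · exfalso
    apply hcross
    have h1' : le r' (st t'') := h ▸ hle
    have h2' : le (st t'') (st s') := hanti _ _ hle'
    exact ⟨r', hr', st s', st_mem_orient' hinv hs', htrans _ _ _ h1' h2'⟩

include hrefl htrans hsl hsr hsup hinv hanti in
/-- The splinter lemma for abstract universes: a finite family of nonempty,
involution-closed sets which splinters admits a nested choice function. -/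
theorem splinter_core {ι : Type} [Nonempty V] :
    ∀ (n : ℕ) (A : ι → Set V) (F : Finset ι), F.card ≤ n →
    (∀ i ∈ F, (A i).Nonempty) →
    (∀ i ∈ F, ∀ x ∈ A i, st x ∈ A i) →
    (∀ i ∈ F, ∀ j ∈ F, ∀ a ∈ A i, ∀ b ∈ A j, ¬ Nst le st a b →
      a ∈ A j ∨ b ∈ A i ∨
        ∃ a' ∈ orient st a, ∃ b' ∈ orient st b, sup a' b' ∈ A i ∪ A j) →
    ∃ g : ι → V, (∀ i ∈ F, g i ∈ A i) ∧
      ∀ i ∈ F, ∀ j ∈ F, Nst le st (g i) (g j) := by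
  classical
  intro n
  induction n with
  | zero =>
    intro A F hcard _ _ _
    have hF : F = ∅ := Finset.card_eq_zero.mp (Nat.le_zero.mp hcard)
    subst hF
    exact ⟨fun _ => Classical.arbitrary V, by simp, by simp⟩
  | succ n IH =>
    intro A F hcard hne hstar hspl
    rcases Finset.eq_empty_or_nonempty F with rfl | ⟨d, hd⟩
    · exact ⟨fun _ => Classical.arbitrary V, by simp, by simp⟩
    set F' := F.erase d with hF'def
    have hF'card : F'.card ≤ n := by
      rw [hF'def, Finset.card_erase_of_mem hd]
      have := Finset.card_pos.mpr ⟨d, hd⟩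
      omega
    have hF'sub : ∀ {j}, j ∈ F' → j ∈ F := fun hj => Finset.mem_of_mem_erase hj
    obtain ⟨g₀, hg₀mem, hg₀nst⟩ := IH A F' hF'card
      (fun i hi => hne i (hF'sub hi)) (fun i hi => hstar i (hF'sub hi))
      (fun i hi j hj => hspl i (hF'sub hi) j (hF'sub hj))
    -- assembling a full choice from an element of `A d` nested with all of `g₀`
    have assemble : ∀ a : V, a ∈ A d → (∀ j ∈ F', Nst le st a (g₀ j)) →
        ∃ g : ι → V, (∀ i ∈ F, g i ∈ A i) ∧
          ∀ i ∈ F, ∀ j ∈ F, Nst le st (g i) (g j) := by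
      intro a ha hnst
      refine ⟨fun j => if j = d then a else g₀ j, ?_, ?_⟩
      · intro i hi
        by_cases h1 : i = d
        · subst h1; simp only [if_pos rfl]; exact ha
        · simp only [if_neg h1]; exact hg₀mem i (Finset.mem_erase.mpr ⟨h1, hi⟩)
      · intro i hi j hj
        by_cases h1 : i = d <;> by_cases h2 : j = d
        · subst h1; subst h2; simp only [if_pos rfl]; exact nst_refl hrefl a
        · subst h1; simp only [if_pos rfl, if_neg h2]
          exact hnst j (Finset.mem_erase.mpr ⟨h2, hj⟩)
        · subst h2; simp only [if_pos rfl, if_neg h1]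
          exact nst_symm hinv hanti (hnst i (Finset.mem_erase.mpr ⟨h1, hi⟩))
        · simp only [if_neg h1, if_neg h2]
          exact hg₀nst i (Finset.mem_erase.mpr ⟨h1, hi⟩) j (Finset.mem_erase.mpr ⟨h2, hj⟩)
    -- inner induction on the number of crossings with g₀
    have inner : ∀ (m : ℕ) (a : V), a ∈ A d →
        (F'.filter (fun j => ¬ Nst le st a (g₀ j))).card ≤ m →
        ∃ g : ι → V, (∀ i ∈ F, g i ∈ A i) ∧
          ∀ i ∈ F, ∀ j ∈ F, Nst le st (g i) (g j) := by
      intro m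
      induction m with
      | zero =>
        intro a ha hcard0
        apply assemble a ha
        intro j hj
        by_contra hc
        have : j ∈ F'.filter (fun j => ¬ Nst le st a (g₀ j)) :=
          Finset.mem_filter.mpr ⟨hj, hc⟩
        have := Finset.card_pos.mpr ⟨j, this⟩
        omega
      | succ m ihm =>
        intro a ha hcardX
        by_cases hX0 : ∀ j ∈ F', Nst le st a (g₀ j)
        · exact assemble a ha hX0
        set X := F'.filter (fun j => ¬ Nst le st a (g₀ j)) with hXdef
        push_neg at hX0
        obtain ⟨i₀, hi₀F', hi₀n⟩ := hX0
        have hXne : X.Nonempty := ⟨i₀, Finset.mem_filter.mpr ⟨hi₀F', hi₀n⟩⟩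
        have hXmem : ∀ {j}, j ∈ X → j ∈ F' ∧ ¬ Nst le st a (g₀ j) :=
          fun hj => Finset.mem_filter.mp hj
        have hnXmem : ∀ {j}, j ∈ F' → j ∉ X → Nst le st a (g₀ j) := by
          intro j hj hnj
          by_contra hc
          exact hnj (Finset.mem_filter.mpr ⟨hj, hc⟩)
        by_cases Hv : ∀ i ∈ X, ∃ v, v ∈ A i ∧ Nst le st v a ∧
            ∀ j ∈ F', j ∉ X → Nst le st v (g₀ j)
        · -- the subfamily of crossing indices, restricted to elements nested
          -- with `a` and with the non-crossed part of `g₀`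
          choose v hv1 hv2 hv3 using Hv
          set C : Set V :=
            {x | Nst le st x a ∧ ∀ j ∈ F', j ∉ X → Nst le st x (g₀ j)} with hCdef
          have hXcard : X.card ≤ n :=
            le_trans (Finset.card_le_card (Finset.filter_subset _ _)) hF'card
          obtain ⟨h₁, hh₁mem, hh₁nst⟩ := IH (fun i => A i ∩ C) X hXcard
            (fun i hi => ⟨v i hi, hv1 i hi, hv2 i hi, hv3 i hi⟩)
            (by
              intro i hi x hx
              refine ⟨hstar i (hF'sub (hXmem hi).1) x hx.1, ?_, ?_⟩
              · exact nst_st_left hinv hx.2.1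
              · exact fun j hj hnj => nst_st_left hinv (hx.2.2 j hj hnj))
            (by
              intro i hi j hj x hx y hy hcr
              rcases hspl i (hF'sub (hXmem hi).1) j (hF'sub (hXmem hj).1)
                x hx.1 y hy.1 hcr with h | h | ⟨x', hx', y', hy', hs⟩
              · exact Or.inl ⟨h, hx.2⟩
              · exact Or.inr (Or.inl ⟨h, hy.2⟩)
              · refine Or.inr (Or.inr ⟨x', hx', y', hy', ?_⟩)
                have hC : sup x' y' ∈ C := by
                  refine ⟨?_, ?_⟩
                  · exact nst_symm hinv hanti
                      (fish htrans hsl hsr hsup hinv hanti hcr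
                        (nst_symm hinv hanti hx.2.1) (nst_symm hinv hanti hy.2.1) hx' hy')
                  · intro j' hj' hnj'
                    exact nst_symm hinv hanti
                      (fish htrans hsl hsr hsup hinv hanti hcr
                        (nst_symm hinv hanti (hx.2.2 j' hj' hnj'))
                        (nst_symm hinv hanti (hy.2.2 j' hj' hnj')) hx' hy')
                rcases hs with h | h
                · exact Or.inl ⟨h, hC⟩
                · exact Or.inr ⟨h, hC⟩)
          -- final assembly
          refine ⟨fun j => if j = d then a else if j ∈ X then h₁ j else g₀ j, ?_, ?_⟩
          · intro i hi
            by_cases h1 : i = d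
            · subst h1; simp only [if_pos rfl]; exact ha
            · have hiF' : i ∈ F' := Finset.mem_erase.mpr ⟨h1, hi⟩
              by_cases h2 : i ∈ X
              · simp only [if_neg h1, if_pos h2]; exact (hh₁mem i h2).1
              · simp only [if_neg h1, if_neg h2]; exact hg₀mem i hiF'
          · intro i hi j hj
            have val : ∀ k, k ∈ F → k ≠ d →
                (k ∈ X ∧ (if k = d then a else if k ∈ X then h₁ k else g₀ k) = h₁ k) ∨
                (k ∈ F' ∧ k ∉ X ∧
                  (if k = d then a else if k ∈ X then h₁ k else g₀ k) = g₀ k) := by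
              intro k hk hk1
              by_cases hk2 : k ∈ X
              · exact Or.inl ⟨hk2, by simp only [if_neg hk1, if_pos hk2]⟩
              · exact Or.inr ⟨Finset.mem_erase.mpr ⟨hk1, hk⟩, hk2,
                  by simp only [if_neg hk1, if_neg hk2]⟩
            have hax : ∀ k ∈ X, Nst le st a (h₁ k) :=
              fun k hk => nst_symm hinv hanti (hh₁mem k hk).2.1
            have hxg : ∀ k ∈ X, ∀ l ∈ F', l ∉ X → Nst le st (h₁ k) (g₀ l) :=
              fun k hk l hl hnl => (hh₁mem k hk).2.2 l hl hnl
            by_cases h1 : i = d <;> by_cases h2 : j = d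
            · subst h1; subst h2; simp only [if_pos rfl]; exact nst_refl hrefl a
            · subst h1
              simp only [if_pos rfl]
              rcases val j hj h2 with ⟨hjX, hje⟩ | ⟨hjF', hjX, hje⟩ <;> simp only [hje]
              · exact hax j hjX
              · exact hnXmem hjF' hjX
            · subst h2
              simp only [if_pos rfl]
              rcases val i hi h1 with ⟨hiX, hie⟩ | ⟨hiF', hiX, hie⟩ <;> simp only [hie]
              · exact nst_symm hinv hanti (hax i hiX)
              · exact nst_symm hinv hanti (hnXmem hiF' hiX)
            · rcases val i hi h1 with ⟨hiX, hie⟩ | ⟨hiF', hiX, hie⟩ <;>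
                rcases val j hj h2 with ⟨hjX, hje⟩ | ⟨hjF', hjX, hje⟩ <;>
                simp only [hie, hje]
              · exact hh₁nst i hiX j hjX
              · exact hxg i hiX j hjF' hjX
              · exact nst_symm hinv hanti (hxg j hjX i hiF' hiX)
              · exact hg₀nst i hiF' j hjF'
        · -- some crossing index admits no such element: a finishing case occurs
          push_neg at Hv
          obtain ⟨i, hiX, hnov⟩ := Hv
          have hiF' : i ∈ F' := (hXmem hiX).1
          have hicross : ¬ Nst le st a (g₀ i) := (hXmem hiX).2
          rcases hspl d hd i (hF'sub hiF') a ha (g₀ i) (hg₀mem i hiF') hicross with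
            hai | hbd | ⟨a', ha', b', hb', hc⟩
          · obtain ⟨j, hj, hnj, hno⟩ := hnov a hai (nst_refl hrefl a)
            exact absurd (hnXmem hj hnj) hno
          · exact assemble (g₀ i) hbd (fun j hj => hg₀nst i hiF' j hj)
          · have hcev : ∀ j ∈ F', j ∉ X → Nst le st (sup a' b') (g₀ j) := by
              intro j hj hnj
              exact nst_symm hinv hanti
                (fish htrans hsl hsr hsup hinv hanti hicross
                  (nst_symm hinv hanti (hnXmem hj hnj)) (hg₀nst j hj i hiF') ha' hb')
            rcases hc with hcAd | hcAi
            · -- corner in A d : recurse with smaller crossing set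
              apply ihm (sup a' b') hcAd
              have hsub : F'.filter (fun j => ¬ Nst le st (sup a' b') (g₀ j)) ⊆
                  X.erase i := by
                intro j hjf
                obtain ⟨hjF', hjn⟩ := Finset.mem_filter.mp hjf
                have hjX : j ∈ X := by
                  by_contra hnj
                  exact hjn (hcev j hjF' hnj)
                have hji : j ≠ i := by
                  rintro rfl
                  exact hjn (nst_symm hinv hanti (nst_corner_right hsr hb'))
                exact Finset.mem_erase.mpr ⟨hji, hjX⟩
              have := Finset.card_le_card hsub
              have := Finset.card_erase_of_mem hiX
              have := Finset.card_pos.mpr ⟨i, hiX⟩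
              omega
            · -- corner in A i : contradicts the choice of i
              obtain ⟨j, hj, hnj, hno⟩ := hnov (sup a' b') hcAi
                (nst_symm hinv hanti (nst_corner_left hsl ha'))
              exact absurd (hcev j hj hnj) hno
    obtain ⟨a, ha⟩ := hne d hd
    exact inner (F'.filter (fun j => ¬ Nst le st a (g₀ j))).card a ha le_rfl
end Core

section Topo

variable {P : Type} [PartialOrder P] {Up : P → Type} [∀ p, Lattice (Up p)]
  [∀ p, TopologicalSpace (Up p)] [∀ p, DiscreteTopology (Up p)]
  {f : ∀ p q : P, p < q → Up q → Up p}

lemma continuous_ILeval (p : P) : Continuous (fun x : InvLim Up f => x.1 p) :=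
  (continuous_apply p).comp continuous_subtype_val

lemma continuous_ILstar (star : ∀ p, Up p → Up p)
    (hfstar : ∀ (p q : P) (h : p < q) (a : Up q), f p q h (star q a) = star p (f p q h a)) :
    Continuous (ILstar star hfstar : InvLim Up f → InvLim Up f) := by
  apply Continuous.subtype_mk
  exact continuous_pi fun p =>
    (continuous_of_discreteTopology (f := star p)).comp (continuous_ILeval p)

lemma isClosed_ILle_pair {W : Type} [TopologicalSpace W] {u v : W → InvLim Up f}
    (hu : Continuous u) (hv : Continuous v) : IsClosed {w | ILle (u w) (v w)} := by
  have hrw : {w | ILle (u w) (v w)} =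
      ⋂ p, (fun w => (((u w).1 p : Up p), ((v w).1 p : Up p))) ⁻¹'
        {q : Up p × Up p | q.1 ≤ q.2} := by
    ext w
    simp [ILle, Set.mem_iInter]
  rw [hrw]
  refine isClosed_iInter fun p => ?_
  exact (isClosed_discrete _).preimage
    (((continuous_ILeval p).comp hu).prodMk ((continuous_ILeval p).comp hv))

lemma ILstar_invol (star : ∀ p, Up p → Up p)
    (hfstar : ∀ (p q : P) (h : p < q) (a : Up q), f p q h (star q a) = star p (f p q h a))
    (hinv : ∀ (p : P) (a : Up p), star p (star p a) = a) (x : InvLim Up f) :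
    ILstar star hfstar (ILstar star hfstar x) = x :=
  Subtype.ext (funext fun p => hinv p _)

end Topo

/-- the profinite splinter lemma. -/
theorem stmt2 {P : Type} [PartialOrder P] [IsDirected P (· ≤ ·)]
    (Up : P → Type) [∀ p, Lattice (Up p)] [∀ p, Finite (Up p)]
    [∀ p, TopologicalSpace (Up p)] [∀ p, DiscreteTopology (Up p)]
    (star : ∀ p, Up p → Up p)
    (hinv : ∀ (p : P) (a : Up p), star p (star p a) = a)
    (hanti : ∀ (p : P) (a b : Up p), a ≤ b → star p b ≤ star p a)
    (f : ∀ p q : P, p < q → Up q → Up p)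
    (hcomp : ∀ (p q r : P) (h1 : p < q) (h2 : q < r) (x : Up r),
      f p q h1 (f q r h2 x) = f p r (h1.trans h2) x)
    (hfstar : ∀ (p q : P) (h : p < q) (a : Up q), f p q h (star q a) = star p (f p q h a))
    (hfsup : ∀ (p q : P) (h : p < q) (a b : Up q),
      f p q h (a ⊔ b) = f p q h a ⊔ f p q h b)
    (hfinf : ∀ (p q : P) (h : p < q) (a b : Up q),
      f p q h (a ⊓ b) = f p q h a ⊓ f p q h b)
    {ι : Type} (B : ι → Set (InvLim Up f))
    (hne : ∀ i, (B i).Nonempty)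
    (hcl : ∀ i, IsClosed (B i))
    (hinvcl : ∀ i, ∀ x ∈ B i, ILstar star hfstar x ∈ B i)
    (hspl : ∀ i j : ι, ∀ a ∈ B i, ∀ b ∈ B j,
      a ∈ B j ∨ b ∈ B i ∨
        ∃ c, ILcorner star hfstar hfsup a b c ∧ c ∈ B i ∪ B j) :
    ∃ N : Set (InvLim Up f), IsClosed N ∧
      (∀ x ∈ N, ∀ y ∈ N, ILnested star hfstar x y) ∧
      ∀ i, ∃ b ∈ B i, b ∈ N := by
  classical
  rcases isEmpty_or_nonempty ι with hι | hι
  · exact ⟨∅, isClosed_empty, by simp, fun i => hι.elim i⟩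
  have hVne : Nonempty (InvLim Up f) := ⟨(hne (Classical.arbitrary ι)).choose⟩
  -- the inverse limit is compact
  have hclosedLim : IsClosed {x : ∀ p, Up p | ∀ (p q : P) (h : p < q), f p q h (x q) = x p} := by
    have hrw : {x : ∀ p, Up p | ∀ (p q : P) (h : p < q), f p q h (x q) = x p}
        = ⋂ (p) (q) (h : p < q), {x : ∀ p, Up p | f p q h (x q) = x p} := by
      ext x; simp [Set.mem_iInter]
    rw [hrw]
    exact isClosed_iInter fun p => isClosed_iInter fun q => isClosed_iInter fun h =>
      isClosed_eq ((continuous_of_discreteTopology).comp (continuous_apply q))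
        (continuous_apply p)
  have hCS : CompactSpace (InvLim Up f) := isCompact_iff_compactSpace.mp hclosedLim.isCompact
  set σ : InvLim Up f → InvLim Up f := ILstar star hfstar with hσ
  -- the nestedness relation is closed
  set R : Set (InvLim Up f × InvLim Up f) :=
    {xy | ILnested star hfstar xy.1 xy.2} with hR
  have hRclosed : IsClosed R := by
    have hrw : R = {xy : InvLim Up f × InvLim Up f | ILle xy.1 xy.2} ∪
        {xy | ILle xy.1 (σ xy.2)} ∪ {xy | ILle (σ xy.1) xy.2} ∪
        {xy | ILle (σ xy.1) (σ xy.2)} := by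
      ext ⟨x, y⟩
      simp only [hR, ILnested, Set.mem_insert_iff, Set.mem_singleton_iff, Set.mem_union,
        Set.mem_setOf_eq, ← hσ]
      constructor
      · rintro ⟨x', (rfl | rfl), y', (rfl | rfl), h⟩ <;> tauto
      · rintro (((h | h) | h) | h)
        · exact ⟨x, Or.inl rfl, y, Or.inl rfl, h⟩
        · exact ⟨x, Or.inl rfl, σ y, Or.inr rfl, h⟩
        · exact ⟨σ x, Or.inr rfl, y, Or.inl rfl, h⟩
        · exact ⟨σ x, Or.inr rfl, σ y, Or.inr rfl, h⟩
    rw [hrw]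
    have hcσ : Continuous σ := continuous_ILstar star hfstar
    exact (((isClosed_ILle_pair continuous_fst continuous_snd).union
      (isClosed_ILle_pair continuous_fst (hcσ.comp continuous_snd))).union
      (isClosed_ILle_pair (hcσ.comp continuous_fst) continuous_snd)).union
      (isClosed_ILle_pair (hcσ.comp continuous_fst) (hcσ.comp continuous_snd))
  -- the closed constraint sets in the product space of choice functions
  set E : ι × ι → Set (ι → InvLim Up f) := fun ij =>
    (fun g => g ij.1) ⁻¹' B ij.1 ∩ (fun g => g ij.2) ⁻¹' B ij.2 ∩
      (fun g => (g ij.1, g ij.2)) ⁻¹' R with hE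
  have hEclosed : ∀ ij, IsClosed (E ij) := by
    rintro ⟨i, j⟩
    exact (((hcl i).preimage (continuous_apply i)).inter
      ((hcl j).preimage (continuous_apply j))).inter
      (hRclosed.preimage ((continuous_apply i).prodMk (continuous_apply j)))
  -- finite intersection property via the splinter lemma
  have hFIP : ∀ u : Finset (ι × ι),
      ((Set.univ : Set (ι → InvLim Up f)) ∩ ⋂ ij ∈ u, E ij).Nonempty := by
    intro u
    set F : Finset ι := u.image Prod.fst ∪ u.image Prod.snd with hF
    have hspl' : ∀ i ∈ F, ∀ j ∈ F, ∀ a ∈ B i, ∀ b ∈ B j,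
        ¬ Nst ILle σ a b → a ∈ B j ∨ b ∈ B i ∨
          ∃ a' ∈ orient σ a, ∃ b' ∈ orient σ b, ILsup hfsup a' b' ∈ B i ∪ B j := by
      intro i _ j _ a ha b hb _
      rcases hspl i j a ha b hb with h | h | ⟨c, ⟨x', hx', y', hy', hcor⟩, hcmem⟩
      · exact Or.inl h
      · exact Or.inr (Or.inl h)
      · refine Or.inr (Or.inr ⟨x', hx', y', hy', ?_⟩)
        rcases hcor with rfl | rfl
        · exact hcmem
        · have : σ (σ (ILsup hfsup x' y')) = ILsup hfsup x' y' :=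
            ILstar_invol star hfstar hinv _
          rw [← this]
          rcases hcmem with h | h
          · exact Or.inl (hinvcl i _ h)
          · exact Or.inr (hinvcl j _ h)
    obtain ⟨g, hgmem, hgnst⟩ := splinter_core (le := ILle) (sup := ILsup hfsup) (st := σ)
      (fun a p => le_refl _) (fun a b c hab hbc p => le_trans (hab p) (hbc p))
      (fun a b p => le_sup_left) (fun a b p => le_sup_right)
      (fun a b c hac hbc p => sup_le (hac p) (hbc p))
      (ILstar_invol star hfstar hinv)
      (fun a b hab p => hanti p _ _ (hab p))
      F.card B F le_rfl (fun i _ => hne i) (fun i _ x hx => hinvcl i x hx) hspl'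
    refine ⟨g, Set.mem_univ g, ?_⟩
    rw [Set.mem_iInter₂]
    intro ij hij
    have hi : ij.1 ∈ F := Finset.mem_union_left _ (Finset.mem_image_of_mem _ hij)
    have hj : ij.2 ∈ F := Finset.mem_union_right _ (Finset.mem_image_of_mem _ hij)
    exact ⟨⟨hgmem _ hi, hgmem _ hj⟩, hgnst _ hi _ hj⟩
  obtain ⟨g, hg⟩ := isCompact_univ.inter_iInter_nonempty E hEclosed hFIP
  have hgE : ∀ ij, g ∈ E ij := Set.mem_iInter.mp hg.2
  refine ⟨closure (Set.range g), isClosed_closure, ?_, ?_⟩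
  · intro x hx y hy
    have hsub : Set.range g ×ˢ Set.range g ⊆ R := by
      rintro ⟨x, y⟩ ⟨⟨i, rfl⟩, ⟨j, rfl⟩⟩
      exact (hgE (i, j)).2
    have hmem : (x, y) ∈ closure (Set.range g ×ˢ Set.range g) := by
      rw [closure_prod_eq]
      exact ⟨hx, hy⟩
    have := closure_mono hsub hmem
    rwa [hRclosed.closure_eq] at this
  · intro i
    exact ⟨g i, (hgE (i, i)).1.1, subset_closure ⟨i, rfl⟩⟩
end

section
/- Let U be a universe of separations with a submodular order function, and let P and P' be profiles in U. If r,s ∈ P both distinguish P and P' efficiently, then both r∨s and r∧s lie in P and distinguish P and P' efficiently. -/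
variable {U : Type} [Lattice U]

/-- An orientation of `S_k` in an abstract universe with order function `ord`:
contains only elements of order `< k`, at least one of `s, s*` for each such `s`,
and both only if they coincide. -/
def OrientU (star : U → U) (ord : U → ℕ) (k : ℕ) (P : Set U) : Prop :=
  (∀ s ∈ P, ord s < k) ∧
  (∀ s : U, ord s < k → (s ∈ P ∨ star s ∈ P)) ∧
  (∀ s ∈ P, star s ∈ P → star s = s)

/-- Consistency of an orientation. -/
def ConsistentU (star : U → U) (P : Set U) : Prop :=
  ∀ r ∈ P, ∀ s ∈ P, star r ≤ s → r = s ∨ r = star s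

/-- A `k`-profile in an abstract universe: a consistent orientation of `S_k`
satisfying the profile property. -/
def ProfileU (star : U → U) (ord : U → ℕ) (k : ℕ) (P : Set U) : Prop :=
  OrientU star ord k P ∧ ConsistentU star P ∧
    ∀ r ∈ P, ∀ s ∈ P, (star r ⊓ star s) ∉ P

/-- `s` distinguishes `P` and `P'`. -/
def DistU (star : U → U) (s : U) (P P' : Set U) : Prop :=
  (s ∈ P ∧ star s ∈ P') ∨ (star s ∈ P ∧ s ∈ P')

/-- `s` distinguishes `P` and `P'` efficiently. -/
def EffDistU (star : U → U) (ord : U → ℕ) (s : U) (P P' : Set U) : Prop :=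
  DistU star s P P' ∧ ∀ t : U, DistU star t P P' → ord s ≤ ord t

/-- joins and meets of efficient distinguishers in a profile are again
efficient distinguishers lying in the profile. -/
theorem stmt5 (star : U → U) (ord : U → ℕ)
    (hinv : ∀ a, star (star a) = a)
    (hanti : ∀ a b : U, a ≤ b → star b ≤ star a)
    (hord : ∀ a, ord (star a) = ord a)
    (hsub : ∀ a b : U, ord (a ⊔ b) + ord (a ⊓ b) ≤ ord a + ord b)
    (P P' : Set U)
    (hP : ∃ k, ProfileU star ord k P) (hP' : ∃ k, ProfileU star ord k P')
    (r s : U) (hr : r ∈ P) (hs : s ∈ P)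
    (hre : EffDistU star ord r P P') (hse : EffDistU star ord s P P') :
    (r ⊔ s) ∈ P ∧ (r ⊓ s) ∈ P ∧
      EffDistU star ord (r ⊔ s) P P' ∧ EffDistU star ord (r ⊓ s) P P' := by
  obtain ⟨k, ⟨⟨hPk, hPor, hPone⟩, hPcon, hPprof⟩⟩ := hP
  obtain ⟨k', ⟨⟨hP'k, hP'or, hP'one⟩, hP'con, hP'prof⟩⟩ := hP'
  by_cases hrs : r ≤ s
  · rw [sup_eq_right.mpr hrs, inf_eq_left.mpr hrs]
    exact ⟨hs, hr, hse, hre⟩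
  by_cases hsr : s ≤ r
  · rw [sup_eq_left.mpr hsr, inf_eq_right.mpr hsr]
    exact ⟨hr, hs, hre, hse⟩
  -- both star r and star s lie in P'
  have hstar_mem : ∀ a : U, a ∈ P → DistU star a P P' → star a ∈ P' := by
    intro a ha hd
    rcases hd with ⟨_, h2⟩ | ⟨h1, h2⟩
    · exact h2
    · rw [hPone a ha h1]; exact h2
  have hr' : star r ∈ P' := hstar_mem r hr hre.1
  have hs' : star s ∈ P' := hstar_mem s hs hse.1
  have hm : ord s = ord r := le_antisymm (hse.2 r hre.1) (hre.2 s hse.1)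
  have hmk : ord r < k := hPk r hr
  have hmk' : ord r < k' := by have := hP'k _ hr'; rwa [hord] at this
  -- the involution is a lattice anti-isomorphism
  have hsupstar : star (r ⊔ s) = star r ⊓ star s := by
    apply le_antisymm
    · exact le_inf (hanti _ _ le_sup_left) (hanti _ _ le_sup_right)
    · have h1 : r ≤ star (star r ⊓ star s) := by
        have := hanti _ _ (inf_le_left : star r ⊓ star s ≤ star r)
        rwa [hinv] at this
      have h2 : s ≤ star (star r ⊓ star s) := by
        have := hanti _ _ (inf_le_right : star r ⊓ star s ≤ star s)
        rwa [hinv] at this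
      have := hanti _ _ (sup_le h1 h2)
      rwa [hinv] at this
  -- star (r ⊔ s) ∉ P by the profile property
  have hsq : star (r ⊔ s) ∉ P := by rw [hsupstar]; exact hPprof r hr s hs
  -- r ⊔ s ∉ P' by consistency
  have hqP' : (r ⊔ s) ∉ P' := by
    intro hq
    rcases hP'con (star r) hr' (r ⊔ s) hq
        (by rw [hinv]; exact le_sup_left) with h | h
    · rcases hP'con (star s) hs' (r ⊔ s) hq
          (by rw [hinv]; exact le_sup_right) with h2 | h2
      · have hrs' : r = s := by
          have h3 : star r = star s := h.trans h2.symm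
          have := congrArg star h3
          rwa [hinv, hinv] at this
        exact hrs hrs'.le
      · have h3 : s = r ⊔ s := by
          have := congrArg star h2; rwa [hinv, hinv] at this
        exact hrs (le_sup_left.trans h3.ge)
    · have h3 : r = r ⊔ s := by
        have := congrArg star h; rwa [hinv, hinv] at this
      exact hsr (le_sup_right.trans h3.ge)
  -- r ⊓ s ∉ P' by the profile property
  have hpP' : (r ⊓ s) ∉ P' := by
    have := hP'prof (star r) hr' (star s) hs'
    rwa [hinv, hinv] at this
  -- star (r ⊓ s) ∉ P by consistency
  have hspP : star (r ⊓ s) ∉ P := by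
    intro hsp
    rcases hPcon r hr (star (r ⊓ s)) hsp (hanti _ _ inf_le_left) with h | h
    · have h2 : star r = r ⊓ s := by
        have := congrArg star h; rwa [hinv] at this
      have h3 : star r ≤ s := h2.le.trans inf_le_right
      rcases hPcon r hr s hs h3 with h4 | h4
      · exact hrs h4.le
      · have h5 : star r = s := by
          have := congrArg star h4; rwa [hinv] at this
        have h6 : s = r ⊓ s := h5.symm.trans h2
        exact hsr (h6.le.trans inf_le_left)
    · rw [hinv] at h
      exact hrs (h.le.trans inf_le_right)
  have hqPmem : ord (r ⊔ s) < k → (r ⊔ s) ∈ P := fun h => (hPor _ h).resolve_right hsq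
  have hqP'mem : ord (r ⊔ s) < k' → star (r ⊔ s) ∈ P' := fun h =>
    (hP'or _ h).resolve_left hqP'
  have hpPmem : ord (r ⊓ s) < k → (r ⊓ s) ∈ P := fun h => (hPor _ h).resolve_right hspP
  have hpP'mem : ord (r ⊓ s) < k' → star (r ⊓ s) ∈ P' := fun h =>
    (hP'or _ h).resolve_left hpP'
  have hsubrs := hsub r s
  -- the meet has order at most ord r
  have hple : ord (r ⊓ s) ≤ ord r := by
    by_contra hgt
    push_neg at hgt
    have hqlt : ord (r ⊔ s) < ord r := by omega
    have hq1 : (r ⊔ s) ∈ P := hqPmem (hqlt.trans hmk)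
    have hq2 : star (r ⊔ s) ∈ P' := hqP'mem (hqlt.trans hmk')
    have := hre.2 (r ⊔ s) (Or.inl ⟨hq1, hq2⟩)
    omega
  have hp1 : (r ⊓ s) ∈ P := hpPmem (lt_of_le_of_lt hple hmk)
  have hp2 : star (r ⊓ s) ∈ P' := hpP'mem (lt_of_le_of_lt hple hmk')
  have hpd : DistU star (r ⊓ s) P P' := Or.inl ⟨hp1, hp2⟩
  have hpe : ord r ≤ ord (r ⊓ s) := hre.2 _ hpd
  have hqle : ord (r ⊔ s) ≤ ord r := by omega
  have hq1 : (r ⊔ s) ∈ P := hqPmem (lt_of_le_of_lt hqle hmk)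
  have hq2 : star (r ⊔ s) ∈ P' := hqP'mem (lt_of_le_of_lt hqle hmk')
  have hqd : DistU star (r ⊔ s) P P' := Or.inl ⟨hq1, hq2⟩
  exact ⟨hq1, hp1, ⟨hqd, fun t ht => hqle.trans (hre.2 t ht)⟩,
    ⟨hpd, fun t ht => hple.trans (hre.2 t ht)⟩⟩
end

section
/- Let G=(V,E) be a graph and N a regular tree set of finite-order separations of G such that for every infinite strictly increasing chain (A_1,B_1) < (A_2,B_2) < … of orientations of elements of N one has ⋂_{i∈ℕ} B_i = ∅. Then there exists a tree-decomposition (T,(V_t)_{t∈T}) of G whose set of induced separations is exactly the set of orientations of elements of N. -/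
/-- A separation of a graph `G`: a pair of vertex sets covering `V` with no edge
between `A ∖ B` and `B ∖ A`. -/
structure GraphSep {V : Type} (G : SimpleGraph V) where
  A : Set V
  B : Set V
  union_eq : A ∪ B = Set.univ
  no_edge : ∀ a ∈ A \ B, ∀ b ∈ B \ A, ¬ G.Adj a b

namespace GraphSep

variable {V V' : Type} {G : SimpleGraph V} {G' : SimpleGraph V'}

/-- The inverse `(B,A)` of a separation `(A,B)`. -/
def inv (s : GraphSep G) : GraphSep G where
  A := s.B
  B := s.A
  union_eq := by rw [Set.union_comm]; exact s.union_eq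
  no_edge := fun a ha b hb h => s.no_edge b hb a ha h.symm

/-- The separator `A ∩ B`. -/
def sepSet (s : GraphSep G) : Set V := s.A ∩ s.B

/-- The order `|A ∩ B|` of a separation, as an extended natural number. -/
noncomputable def order (s : GraphSep G) : ℕ∞ := (s.A ∩ s.B).encard

/-- `(A,B) ≤ (C,D)` iff `A ⊆ C` and `D ⊆ B`. -/
protected def le (s t : GraphSep G) : Prop := s.A ⊆ t.A ∧ t.B ⊆ s.B

/-- Two separations are nested if after possibly replacing either by its inverse
they are `≤`-comparable. -/
def Nested (s t : GraphSep G) : Prop :=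
  s.le t ∨ s.le t.inv ∨ s.inv.le t ∨ s.inv.le t.inv

lemma mem_A_or_B (s : GraphSep G) (x : V) : x ∈ s.A ∨ x ∈ s.B := by
  have h : x ∈ s.A ∪ s.B := by rw [s.union_eq]; exact Set.mem_univ x
  exact (Set.mem_union _ _ _).1 h

/-- The join `(A,B) ∨ (C,D) = (A ∪ C, B ∩ D)`. -/
def join (s t : GraphSep G) : GraphSep G where
  A := s.A ∪ t.A
  B := s.B ∩ t.B
  union_eq := by
    apply Set.eq_univ_of_forall
    intro x
    rcases s.mem_A_or_B x with h1 | h1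
    · exact Or.inl (Or.inl h1)
    · rcases t.mem_A_or_B x with h2 | h2
      · exact Or.inl (Or.inr h2)
      · exact Or.inr ⟨h1, h2⟩
  no_edge := by
    rintro a ⟨haA, haB⟩ b ⟨hbB, hbA⟩ hadj
    by_cases hsB : a ∈ s.B
    · have hatB : a ∉ t.B := fun h => haB ⟨hsB, h⟩
      have hatA : a ∈ t.A := (t.mem_A_or_B a).resolve_right hatB
      exact t.no_edge a ⟨hatA, hatB⟩ b ⟨hbB.2, fun h => hbA (Or.inr h)⟩ hadj
    · have hasA : a ∈ s.A := (s.mem_A_or_B a).resolve_right hsB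
      exact s.no_edge a ⟨hasA, hsB⟩ b ⟨hbB.1, fun h => hbA (Or.inl h)⟩ hadj

/-- The image of a separation under a graph isomorphism. -/
def map (φ : G ≃g G') (s : GraphSep G) : GraphSep G' where
  A := ⇑φ '' s.A
  B := ⇑φ '' s.B
  union_eq := by
    apply Set.eq_univ_of_forall
    intro y
    rcases s.mem_A_or_B (φ.symm y) with h | h
    · exact Or.inl ⟨φ.symm y, h, φ.apply_symm_apply y⟩
    · exact Or.inr ⟨φ.symm y, h, φ.apply_symm_apply y⟩
  no_edge := by
    rintro a ⟨⟨x, hxA, rfl⟩, haB⟩ b ⟨⟨y, hyB, rfl⟩, hbA⟩ hadj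
    exact s.no_edge x ⟨hxA, fun h => haB ⟨x, h, rfl⟩⟩ y ⟨hyB, fun h => hbA ⟨y, h, rfl⟩⟩
      (φ.map_adj_iff.mp hadj)

/-- The neighbourhood of a set of vertices. -/
def nbhd (G : SimpleGraph V) (X : Set V) : Set V := {v | v ∉ X ∧ ∃ x ∈ X, G.Adj v x}

/-- `w` can be reached from `v` by a walk avoiding `X`. -/
def AvoidReach (G : SimpleGraph V) (X : Set V) (v w : V) : Prop :=
  ∃ p : G.Walk v w, ∀ u ∈ p.support, u ∉ X

/-- `C` is a (connected) component of `G − X`. -/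
def IsCompOf (G : SimpleGraph V) (X C : Set V) : Prop :=
  ∃ v, v ∉ X ∧ C = {w | AvoidReach G X v w}

/-- A separation `(A,B)` is tight if each of `A ∖ B` and `B ∖ A` contains a component
of `G − (A ∩ B)` whose neighbourhood is all of `A ∩ B`. -/
def IsTight (s : GraphSep G) : Prop :=
  (∃ C, IsCompOf G s.sepSet C ∧ nbhd G C = s.sepSet ∧ C ⊆ s.A \ s.B) ∧
  (∃ C, IsCompOf G s.sepSet C ∧ nbhd G C = s.sepSet ∧ C ⊆ s.B \ s.A)

/-- An orientation of `S_k`: it contains only separations of order `< k`, contains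
at least one of `s, s⁻¹` for every separation of order `< k`, and contains both only
if they coincide. -/
def IsOrientation (k : ℕ∞) (P : Set (GraphSep G)) : Prop :=
  (∀ s ∈ P, s.order < k) ∧
  (∀ s : GraphSep G, s.order < k → (s ∈ P ∨ s.inv ∈ P)) ∧
  (∀ s ∈ P, s.inv ∈ P → s.inv = s)

/-- Consistency: no two members `r, s` with distinct underlying separations satisfy
`r⁻¹ ≤ s`. -/
def Consistent (P : Set (GraphSep G)) : Prop :=
  ∀ r ∈ P, ∀ s ∈ P, r.inv.le s → r = s ∨ r = s.inv

/-- A `k`-profile: a consistent orientation of `S_k` satisfying the profile property. -/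
def IsProfile (k : ℕ∞) (P : Set (GraphSep G)) : Prop :=
  IsOrientation k P ∧ Consistent P ∧ ∀ s ∈ P, ∀ t ∈ P, (s.join t).inv ∉ P

/-- A profile in `G` is a `k`-profile for some `k ∈ ℕ ∪ {ℵ₀}`. -/
def IsProfileIn (G : SimpleGraph V) (P : Set (GraphSep G)) : Prop := ∃ k : ℕ∞, IsProfile k P

/-- A profile is regular if it contains no separation of the form `(V, X)`. -/
def RegularP (P : Set (GraphSep G)) : Prop := ∀ s ∈ P, s.A ≠ Set.univ

/-- A profile is bounded if it is a `k`-profile for some finite `k` and is not a subset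
of any `ℵ₀`-profile. -/
def BoundedP (P : Set (GraphSep G)) : Prop :=
  (∃ k : ℕ, IsProfile (k : ℕ∞) P) ∧ ∀ Q : Set (GraphSep G), IsProfile ⊤ Q → ¬ P ⊆ Q

/-- `s` distinguishes the profiles `P` and `P'`. -/
def Distinguishes (s : GraphSep G) (P P' : Set (GraphSep G)) : Prop :=
  (s ∈ P ∧ s.inv ∈ P') ∨ (s.inv ∈ P ∧ s ∈ P')

/-- `s` distinguishes `P` and `P'` efficiently: it has minimum order among all
separations distinguishing `P` and `P'`. -/
def EffDist (s : GraphSep G) (P P' : Set (GraphSep G)) : Prop :=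
  Distinguishes s P P' ∧ ∀ t : GraphSep G, Distinguishes t P P' → s.order ≤ t.order

/-- `P` and `P'` are distinguishable: some finite-order separation distinguishes them. -/
def Distinguishable (P P' : Set (GraphSep G)) : Prop :=
  ∃ s : GraphSep G, s.order < ⊤ ∧ Distinguishes s P P'

/-- Robustness of a profile. -/
def RobustP (P : Set (GraphSep G)) : Prop :=
  ∀ s ∈ P, ∀ t : GraphSep G, t.order < ⊤ →
    (s.join t).order < s.order → (s.join t.inv).order < s.order →
    (s.join t ∈ P ∨ s.join t.inv ∈ P)

/-- A `k`-profile is principal if for every vertex set `X` with `|X| < k` it contains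
`(V ∖ C, C ∪ X)` for some component `C` of `G − X`. -/
def PrincipalP (k : ℕ∞) (P : Set (GraphSep G)) : Prop :=
  ∀ X : Set V, X.encard < k →
    ∃ C, IsCompOf G X C ∧ ∃ s ∈ P, s.A = Cᶜ ∧ s.B = C ∪ X

/-- `c` is a corner separation of `s` and `t`. -/
def IsCornerSep (s t c : GraphSep G) : Prop :=
  ∃ s' ∈ ({s, s.inv} : Set (GraphSep G)), ∃ t' ∈ ({t, t.inv} : Set (GraphSep G)),
    c = s'.join t' ∨ c = (s'.join t').inv

/-- The set `S ⊆ V ∖ {x,y}` separates `x` from `y` in `G`. -/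
def SeparatesIn (G : SimpleGraph V) (x y : V) (S : Set V) : Prop :=
  x ∉ S ∧ y ∉ S ∧ ∀ p : G.Walk x y, ∃ u ∈ p.support, u ∈ S

/-- `S` is a `⊆`-minimal `x`–`y`-separator in `G`. -/
def MinSeparator (G : SimpleGraph V) (x y : V) (S : Set V) : Prop :=
  SeparatesIn G x y S ∧ ∀ S' ⊆ S, SeparatesIn G x y S' → S' = S

/-- The separation of `G` induced by an (oriented) edge of a tree-decomposition. -/
def InducedSep {ι : Type} (T : SimpleGraph ι) (𝒱 : ι → Set V) (x : GraphSep G) : Prop :=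
  ∃ t t' : ι, T.Adj t t' ∧
    x.A = (⋃ u ∈ {u : ι | ∃ p : T.Walk u t, s(t, t') ∉ p.edges}, 𝒱 u) ∧
    x.B = (⋃ u ∈ {u : ι | ∃ p : T.Walk u t', s(t, t') ∉ p.edges}, 𝒱 u)

/-- Opposite pairs of corner separations of `s` and `t`. -/
def OppPair (s t c d : GraphSep G) : Prop :=
  (c = s.join t ∧ d = s.inv.join t.inv) ∨ (c = s.inv.join t.inv ∧ d = s.join t) ∨
  (c = s.join t.inv ∧ d = s.inv.join t) ∨ (c = s.inv.join t ∧ d = s.join t.inv)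

end GraphSep

/-!
Every `s ∈ N` determines the orientation of `N` made of the separations below `s` or strictly
below its inverse. These orientations are the nodes of the tree, the nodes of `w` and `w⁻¹`
being adjacent, and the bag of a node is the intersection of the big sides of its separations.
Whether `u` belongs to a node changes exactly when the edge of `u` is crossed; hence the tree is
acyclic, the bags satisfy (T3), and the bags on the two sides of the edge of `u` have unions
`u.A` and `u.B`. The chain condition makes every orientation well founded upwards. This provides maximal
elements, hence bags containing a given vertex or edge, and it makes the separations pointing
from one node towards another a finite chain, so that the tree is connected.
-/

theorem Set.WellFoundedOn.exists_le_maximal {α : Type*} [Preorder α] {s : Set α} {a : α}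
    (h : s.WellFoundedOn (· > ·)) (ha : a ∈ s) : ∃ b, a ≤ b ∧ Maximal (· ∈ s) b := by
  obtain ⟨b, ⟨hbs, hab⟩, hmax⟩ :=
    (h.subset (Set.sep_subset s (a ≤ ·))).exists_maximal ⟨a, ha, le_rfl⟩
  exact ⟨b, hab, hbs, fun y hy hby => hmax ⟨hy, hab.trans hby⟩ hby⟩

theorem IsChain.finite_of_wellFoundedOn {α : Type*} [PartialOrder α] {s : Set α}
    (hs : IsChain (· ≤ ·) s) (hlt : s.WellFoundedOn (· < ·))
    (hgt : s.WellFoundedOn (· > ·)) : s.Finite := by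
  classical
  let _ := hs.linearOrder
  have : WellFoundedLT s := ⟨hlt⟩
  have : WellFoundedGT s := ⟨hgt⟩
  exact Set.finite_coe_iff.mp (Finite.of_wellFoundedLT_wellFoundedGT s)

structure IsTreeDecomposition {V ι : Type} (G : SimpleGraph V) (T : SimpleGraph ι)
    (𝒱 : ι → Set V) : Prop where
  isTree : T.IsTree
  exists_mem : ∀ v : V, ∃ t : ι, v ∈ 𝒱 t
  exists_adj_mem : ∀ v w : V, G.Adj v w → ∃ t : ι, v ∈ 𝒱 t ∧ w ∈ 𝒱 t
  inter_subset_of_mem_support : ∀ (t₁ t₂ t₃ : ι) (p : T.Walk t₁ t₃), p.IsPath →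
    t₂ ∈ p.support → 𝒱 t₁ ∩ 𝒱 t₃ ⊆ 𝒱 t₂

theorem isTreeDecomposition_bot_univ {V : Type} (G : SimpleGraph V) :
    IsTreeDecomposition G (⊥ : SimpleGraph Unit) fun _ => Set.univ where
  isTree := .of_subsingleton
  exists_mem _ := ⟨(), trivial⟩
  exists_adj_mem _ _ _ := ⟨(), trivial, trivial⟩
  inter_subset_of_mem_support _ _ _ _ _ _ := Set.subset_univ _

namespace GraphSep

variable {V : Type} {G : SimpleGraph V}

@[ext]
theorem ext {s t : GraphSep G} (hA : s.A = t.A) (hB : s.B = t.B) : s = t := by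
  cases s; cases t; cases hA; cases hB; rfl

instance : PartialOrder (GraphSep G) where
  le := GraphSep.le
  le_refl _ := ⟨subset_rfl, subset_rfl⟩
  le_trans _ _ _ h₁ h₂ := ⟨h₁.1.trans h₂.1, h₂.2.trans h₁.2⟩
  le_antisymm _ _ h₁ h₂ := ext (h₁.1.antisymm h₂.1) (h₂.2.antisymm h₁.2)

@[simp]
theorem inv_inv (s : GraphSep G) : s.inv.inv = s := rfl

theorem inv_le_inv_iff {s t : GraphSep G} : s.inv ≤ t.inv ↔ t ≤ s := And.comm

theorem inv_le_comm {s t : GraphSep G} : s.inv ≤ t ↔ t.inv ≤ s := And.comm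

theorem le_inv_comm {s t : GraphSep G} : s ≤ t.inv ↔ t ≤ s.inv := And.comm

theorem inv_lt_inv_iff {s t : GraphSep G} : s.inv < t.inv ↔ t < s := by
  simp only [lt_iff_le_not_ge, inv_le_inv_iff]

theorem pair_subset_A_or_B {v w : V} (hvw : G.Adj v w) (s : GraphSep G) :
    {v, w} ⊆ s.A ∨ {v, w} ⊆ s.B := by
  simp only [Set.insert_subset_iff, Set.singleton_subset_iff]
  grind [s.no_edge v, s.no_edge w, s.mem_A_or_B v, s.mem_A_or_B w, hvw.symm]

theorem not_inducedSep_bot {ι : Type} (𝒱 : ι → Set V) (x : GraphSep G) :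
    ¬ InducedSep (⊥ : SimpleGraph ι) 𝒱 x := by
  rintro ⟨_, _, hadj, -⟩
  exact hadj

structure IsRegularTreeSet (N : Set (GraphSep G)) : Prop where
  inv_mem : ∀ s ∈ N, s.inv ∈ N
  nested : ∀ s ∈ N, ∀ t ∈ N, s ≤ t ∨ s ≤ t.inv ∨ s.inv ≤ t ∨ s.inv ≤ t.inv
  regular : ∀ s ∈ N, ¬ s.A ⊆ s.B ∧ ¬ s.B ⊆ s.A

variable {N : Set (GraphSep G)} {s t u w : GraphSep G}

theorem IsRegularTreeSet.not_inv_le (hN : IsRegularTreeSet N) (hs : s ∈ N) : ¬ s.inv ≤ s :=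
  fun h => (hN.regular s hs).2 h.1

theorem IsRegularTreeSet.not_le_inv (hN : IsRegularTreeSet N) (hs : s ∈ N) : ¬ s ≤ s.inv :=
  fun h => (hN.regular s hs).1 h.1

def UpwardWellFounded (N : Set (GraphSep G)) : Prop :=
  ∀ v : V, {t | t ∈ N ∧ v ∈ t.B}.WellFoundedOn (· > ·)

theorem upwardWellFounded_of_iInter_B_eq_empty
    (hchain : ∀ f : ℕ → GraphSep G, (∀ i, f i ∈ N) →
      (∀ i, (f i).le (f (i + 1)) ∧ f i ≠ f (i + 1)) → (⋂ i, (f i).B) = ∅) :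
    UpwardWellFounded N := by
  intro v
  rw [Set.wellFoundedOn_iff_no_descending_seq]
  intro f hf
  have hlt (i : ℕ) : f i < f (i + 1) := f.map_rel_iff.2 i.lt_succ_self
  have hempty := hchain f (fun i => (hf i).1) fun i => ⟨(hlt i).le, (hlt i).ne⟩
  exact (Set.eq_empty_iff_forall_notMem.1 hempty) v (Set.mem_iInter.2 fun i => (hf i).2)

/-- For `s ∈ N`, an orientation of `N` in which `s` is maximal: the node of the tree that `s`
points to. -/
def orient (N : Set (GraphSep G)) (s : GraphSep G) : Set (GraphSep G) :=
  {t | t ∈ N ∧ (t ≤ s ∨ t < s.inv)}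

theorem orient_subset : orient N s ⊆ N := fun _ ht => ht.1

theorem mem_orient_self (hs : s ∈ N) : s ∈ orient N s := ⟨hs, Or.inl le_rfl⟩

theorem mem_orient_of_le (ht : t ∈ N) (htw : t ≤ w) (hw : w ∈ orient N s) :
    t ∈ orient N s :=
  ⟨ht, hw.2.imp htw.trans htw.trans_lt⟩

theorem inv_notMem_orient_self (hN : IsRegularTreeSet N) (hs : s ∈ N) :
    s.inv ∉ orient N s := by
  rintro ⟨-, h | h⟩
  exacts [hN.not_inv_le hs h, h.ne rfl]

theorem mem_orient_inv_iff (hts : t ≠ s) (hts' : t ≠ s.inv) :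
    t ∈ orient N s.inv ↔ t ∈ orient N s := by
  simp only [orient, Set.mem_ofPred_eq, inv_inv, le_iff_lt_or_eq, hts, hts', or_false]
  rw [or_comm]

theorem inv_mem_orient_iff (hN : IsRegularTreeSet N) (hs : s ∈ N) (ht : t ∈ N) :
    t.inv ∈ orient N s ↔ t ∉ orient N s := by
  constructor
  · rintro ⟨-, h₁ | h₁⟩ ⟨-, h₂ | h₂⟩
    · exact hN.not_inv_le hs (inv_le_comm.1 h₁ |>.trans h₂)
    · exact lt_irrefl _ ((inv_le_comm.1 h₁).trans_lt h₂)
    · exact lt_irrefl _ ((inv_lt_inv_iff.1 h₁).trans_le h₂)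
    · exact hN.not_le_inv hs ((inv_lt_inv_iff.1 h₁).le.trans h₂.le)
  · intro hnot
    rcases hN.nested t ht s hs with h | h | h | h
    · exact absurd ⟨ht, Or.inl h⟩ hnot
    · rcases h.lt_or_eq with h | rfl
      · exact absurd ⟨ht, Or.inr h⟩ hnot
      · exact mem_orient_self hs
    · exact ⟨hN.inv_mem t ht, Or.inl h⟩
    · rcases h.lt_or_eq with h | h
      · exact ⟨hN.inv_mem t ht, Or.inr h⟩
      · obtain rfl : t = s := congrArg inv h
        exact absurd (mem_orient_self hs) hnot

theorem orient_eq_of_subset (hN : IsRegularTreeSet N) (hs : s ∈ N) (ht : t ∈ N)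
    (hst : orient N s ⊆ orient N t) : orient N s = orient N t := by
  refine hst.antisymm fun w hw => ?_
  by_contra hws
  exact (inv_mem_orient_iff hN ht hw.1).1 (hst ((inv_mem_orient_iff hN hs hw.1).2 hws)) hw

theorem orient_eq_of_maximal (hN : IsRegularTreeSet N) (hs : s ∈ N)
    (hu : Maximal (· ∈ orient N s) u) : orient N u = orient N s := by
  refine orient_eq_of_subset hN hu.1.1 hs fun w ⟨hwN, hw⟩ => ?_
  rcases hw with h | h
  · exact mem_orient_of_le hwN h hu.1
  · by_contra hws
    have hinv := (inv_mem_orient_iff hN hs hwN).2 hws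
    have heq : w.inv = u := le_antisymm (hu.2 hinv (le_inv_comm.1 h.le)) (le_inv_comm.1 h.le)
    exact h.ne (by rw [← heq, inv_inv])

theorem orient_inv_subset (hN : IsRegularTreeSet N) (hs : s ∈ N) :
    orient N s.inv ⊆ insert s.inv (orient N s \ {s}) := by
  intro t ht
  by_cases hts' : t = s.inv
  · exact Or.inl hts'
  by_cases hts : t = s
  · subst hts
    exact (inv_notMem_orient_self hN (hN.inv_mem t hs) ht).elim
  exact Or.inr ⟨(mem_orient_inv_iff hts hts').1 ht, hts⟩

theorem wellFoundedOn_orient (hN : IsRegularTreeSet N) (hwf : UpwardWellFounded N) (hs : s ∈ N) :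
    (orient N s).WellFoundedOn (· > ·) := by
  obtain ⟨a, ha, -⟩ := Set.not_subset.1 (hN.regular s hs).1
  obtain ⟨b, hb, -⟩ := Set.not_subset.1 (hN.regular s hs).2
  refine ((hwf a).union (hwf b)).subset fun t ⟨htN, ht⟩ => ?_
  rcases ht with h | h
  exacts [Or.inr ⟨htN, h.2 hb⟩, Or.inl ⟨htN, h.le.2 ha⟩]

theorem isChain_orient_diff (hN : IsRegularTreeSet N) (hs : s ∈ N) (ht : t ∈ N) :
    IsChain (· ≤ ·) (orient N t \ orient N s) := by
  intro u ⟨hut, hus⟩ w ⟨hwt, hws⟩ _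
  rcases hN.nested u hut.1 w hwt.1 with h | h | h | h
  · exact Or.inl h
  · exact absurd (mem_orient_of_le hut.1 h ((inv_mem_orient_iff hN hs hwt.1).2 hws)) hus
  · exact absurd hut ((inv_mem_orient_iff hN ht hut.1).1
      (mem_orient_of_le (hN.inv_mem u hut.1) h hwt))
  · exact Or.inr (inv_le_inv_iff.1 h)

theorem finite_orient_diff (hN : IsRegularTreeSet N) (hwf : UpwardWellFounded N) (hs : s ∈ N)
    (ht : t ∈ N) :
    (orient N t \ orient N s).Finite := by
  have hmaps : Set.MapsTo inv (orient N t \ orient N s) (orient N s) :=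
    fun u hu => (inv_mem_orient_iff hN hs hu.1.1).2 hu.2
  refine (isChain_orient_diff hN hs ht).finite_of_wellFoundedOn ?_
    ((wellFoundedOn_orient hN hwf ht).subset Set.sdiff_subset)
  exact ((wellFoundedOn_orient hN hwf hs).mapsTo inv hmaps).mono' fun a _ b _ h =>
    inv_lt_inv_iff.2 h

theorem orient_eq_of_maximal_diff (hN : IsRegularTreeSet N) (ht : t ∈ N)
    (hm : Maximal (· ∈ orient N t \ orient N s) u) : orient N u = orient N t := by
  refine orient_eq_of_maximal hN ht ⟨hm.1.1, fun w hw huw => ?_⟩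
  refine hm.2 ⟨hw, fun hws => ?_⟩ huw
  exact hm.1.2 (mem_orient_of_le hm.1.1.1 huw hws)

theorem ncard_orient_inv_diff_lt (hN : IsRegularTreeSet N) (hwf : UpwardWellFounded N)
    (hs : s ∈ N) (ht : t ∈ N) (hu : u ∈ orient N t \ orient N s) (hut : orient N u = orient N t) :
    (orient N u.inv \ orient N s).ncard < (orient N t \ orient N s).ncard := by
  have hfin := finite_orient_diff hN hwf hs ht
  refine (Set.ncard_le_ncard ?_ hfin.sdiff).trans_lt (Set.ncard_sdiff_singleton_lt_of_mem hu hfin)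
  rintro w ⟨hw, hws⟩
  rcases orient_inv_subset hN hu.1.1 hw with rfl | ⟨hwu, hne⟩
  · exact absurd ((inv_mem_orient_iff hN hs hu.1.1).2 hu.2) hws
  · exact ⟨⟨hut ▸ hwu, hws⟩, hne⟩

def Node (N : Set (GraphSep G)) : Type := {O : Set (GraphSep G) // ∃ s ∈ N, orient N s = O}

def Node.of (hs : s ∈ N) : Node N := ⟨orient N s, s, hs, rfl⟩

theorem Node.eq_of (hs : s ∈ N) {X : Node N} (hX : X.1 = orient N s) : X = Node.of hs :=
  Subtype.ext hX

theorem Node.subset (X : Node N) : X.1 ⊆ N := by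
  obtain ⟨s, -, hs⟩ := X.2
  exact hs ▸ orient_subset

def Node.bag (X : Node N) : Set V := {v | ∀ t ∈ X.1, v ∈ t.B}

def decompTree (N : Set (GraphSep G)) : SimpleGraph (Node N) :=
  SimpleGraph.fromRel fun X Y => ∃ w ∈ N, X.1 = orient N w ∧ Y.1 = orient N w.inv

theorem decompTree_adj (hN : IsRegularTreeSet N) {X Y : Node N} :
    (decompTree N).Adj X Y ↔ ∃ w ∈ N, X.1 = orient N w ∧ Y.1 = orient N w.inv := by
  rw [decompTree, SimpleGraph.fromRel_adj]
  constructor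
  · rintro ⟨-, h | ⟨w, hw, hY, hX⟩⟩
    · exact h
    · exact ⟨w.inv, hN.inv_mem w hw, hX, hY⟩
  · rintro ⟨w, hw, hX, hY⟩
    refine ⟨fun hXY => inv_notMem_orient_self hN (hN.inv_mem w hw) ?_,
      Or.inl ⟨w, hw, hX, hY⟩⟩
    rw [inv_inv, ← hY, ← hXY, hX]
    exact mem_orient_self hw

theorem decompTree_adj_of (hN : IsRegularTreeSet N) (hw : w ∈ N) :
    (decompTree N).Adj (Node.of hw) (Node.of (hN.inv_mem w hw)) :=
  (decompTree_adj hN).2 ⟨w, hw, rfl, rfl⟩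

def treeEdge (hN : IsRegularTreeSet N) (hu : u ∈ N) : Sym2 (Node N) :=
  s(Node.of (hN.inv_mem u hu), Node.of hu)

theorem mem_iff_mem_iff_ne_treeEdge (hN : IsRegularTreeSet N) (hu : u ∈ N) {X Y : Node N}
    (hXY : (decompTree N).Adj X Y) : (u ∈ X.1 ↔ u ∈ Y.1) ↔ s(X, Y) ≠ treeEdge hN hu := by
  have hu' : u ∉ orient N u.inv := inv_notMem_orient_self hN (hN.inv_mem u hu)
  constructor
  · rintro hiff he
    rcases Sym2.eq_iff.1 he with ⟨rfl, rfl⟩ | ⟨rfl, rfl⟩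
    · exact hu' (hiff.2 (mem_orient_self hu))
    · exact hu' (hiff.1 (mem_orient_self hu))
  · intro hne
    obtain ⟨w, hw, hX, hY⟩ := (decompTree_adj hN).1 hXY
    by_cases huw : u = w
    · subst huw
      obtain rfl := Node.eq_of hu hX
      obtain rfl := Node.eq_of (hN.inv_mem u hu) hY
      exact absurd Sym2.eq_swap hne
    by_cases huw' : u = w.inv
    · subst huw'
      obtain rfl := Node.eq_of (hN.inv_mem _ hu) hX
      obtain rfl := Node.eq_of hu hY
      exact absurd rfl hne
    rw [hX, hY, mem_orient_inv_iff huw huw']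

theorem even_count_treeEdge_iff [DecidableEq (Node N)] (hN : IsRegularTreeSet N) (hu : u ∈ N)
    {X Y : Node N} (p : (decompTree N).Walk X Y) :
    Even (p.edges.count (treeEdge hN hu)) ↔ (u ∈ X.1 ↔ u ∈ Y.1) := by
  induction p with
  | nil => simp
  | @cons X M Y hXM q ih =>
    have hstep := mem_iff_mem_iff_ne_treeEdge hN hu hXM
    rw [SimpleGraph.Walk.edges_cons, List.count_cons]
    by_cases he : s(X, M) = treeEdge hN hu
    · simp only [he, beq_self_eq_true, if_true, Nat.even_add_one, ih, ne_eq, not_true] at hstep ⊢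
      tauto
    · simp only [he, beq_iff_eq, if_false, add_zero, ih, ne_eq, not_false_iff] at hstep ⊢
      tauto

theorem treeEdge_notMem_edges_of_isTrail (hN : IsRegularTreeSet N) (hu : u ∈ N) {X Y : Node N}
    {p : (decompTree N).Walk X Y} (hp : p.IsTrail) (h : u ∈ X.1 ↔ u ∈ Y.1) :
    treeEdge hN hu ∉ p.edges := by
  classical
  have hle := hp.count_edges_le_one (treeEdge hN hu)
  obtain ⟨k, hk⟩ := (even_count_treeEdge_iff hN hu p).2 h
  rw [← List.count_eq_zero]
  omega

theorem exists_eq_treeEdge_of_adj (hN : IsRegularTreeSet N) {X Y : Node N}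
    (hXY : (decompTree N).Adj X Y) : ∃ u, ∃ hu : u ∈ N, s(X, Y) = treeEdge hN hu := by
  obtain ⟨w, hw, hX, hY⟩ := (decompTree_adj hN).1 hXY
  refine ⟨w, hw, not_not.1 fun hne => ?_⟩
  have hwY := ((mem_iff_mem_iff_ne_treeEdge hN hw hXY).2 hne).1 (hX ▸ mem_orient_self hw)
  exact inv_notMem_orient_self hN (hN.inv_mem w hw) (hY ▸ hwY)

theorem isAcyclic_decompTree (hN : IsRegularTreeSet N) : (decompTree N).IsAcyclic := by
  intro X c hc
  cases c with
  | nil => exact hc.not_nil .nil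
  | cons hXY q =>
    obtain ⟨u, hu, he⟩ := exists_eq_treeEdge_of_adj hN hXY
    refine treeEdge_notMem_edges_of_isTrail hN hu hc.isTrail Iff.rfl ?_
    rw [SimpleGraph.Walk.edges_cons, ← he]
    exact List.mem_cons_self

theorem decompTree_reachable (hN : IsRegularTreeSet N) (hwf : UpwardWellFounded N) (hs : s ∈ N)
    (ht : t ∈ N) : (decompTree N).Reachable (Node.of hs) (Node.of ht) := by
  induction hn : (orient N t \ orient N s).ncard using Nat.strong_induction_on generalizing t
    with | _ n ih =>
  obtain hD | hD := (orient N t \ orient N s).eq_empty_or_nonempty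
  · rw [Node.eq_of (X := Node.of ht) hs (orient_eq_of_subset hN ht hs (Set.sdiff_eq_empty.1 hD))]
  obtain ⟨m, hm⟩ := ((wellFoundedOn_orient hN hwf ht).subset Set.sdiff_subset).exists_maximal hD
  have hmN : m ∈ N := hm.1.1.1
  have hmt := orient_eq_of_maximal_diff hN ht hm
  have hlt := ncard_orient_inv_diff_lt hN hwf hs ht hm.1 hmt
  rw [Node.eq_of (X := Node.of ht) hmN hmt.symm]
  exact (ih _ (hn ▸ hlt) (hN.inv_mem m hmN) rfl).trans
    (decompTree_adj_of hN (hN.inv_mem m hmN)).reachable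

theorem isTree_decompTree (hN : IsRegularTreeSet N) (hwf : UpwardWellFounded N) (hne : N.Nonempty) :
    (decompTree N).IsTree where
  connected :=
    { preconnected := by
        rintro ⟨_, s, hs, rfl⟩ ⟨_, t, ht, rfl⟩
        exact decompTree_reachable hN hwf hs ht
      nonempty := ⟨Node.of hne.some_mem⟩ }
  isAcyclic := isAcyclic_decompTree hN

theorem exists_le_subset_bag (hN : IsRegularTreeSet N) (hwf : UpwardWellFounded N) {S : Set V}
    (hS : S.Nonempty) (hsplit : ∀ t ∈ N, S ⊆ t.A ∨ S ⊆ t.B) (hu : u ∈ N) (huS : S ⊆ u.B) :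
    ∃ m, ∃ hm : m ∈ N, u ≤ m ∧ S ⊆ (Node.of hm).bag := by
  obtain ⟨v, hv⟩ := hS
  have hP : {t | t ∈ N ∧ S ⊆ t.B}.WellFoundedOn (· > ·) :=
    (hwf v).subset fun t ht => ⟨ht.1, ht.2 hv⟩
  obtain ⟨m, hum, ⟨hmN, hmS⟩, hmax⟩ := hP.exists_le_maximal ⟨hu, huS⟩
  refine ⟨m, hmN, hum, fun x hx t ⟨htN, ht⟩ => ?_⟩
  rcases ht with h | h
  · exact h.2 (hmS hx)
  rcases hsplit t htN with htS | htS
  · have hmt : m ≤ t.inv := le_inv_comm.1 h.le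
    have heq : t.inv = m := le_antisymm (hmax ⟨hN.inv_mem t htN, htS⟩ hmt) hmt
    exact absurd (by rw [← heq, inv_inv]) h.ne
  · exact htS hx

theorem exists_subset_bag (hN : IsRegularTreeSet N) (hwf : UpwardWellFounded N) (hne : N.Nonempty)
    {S : Set V} (hS : S.Nonempty) (hsplit : ∀ t ∈ N, S ⊆ t.A ∨ S ⊆ t.B) :
    ∃ X : Node N, S ⊆ X.bag := by
  obtain ⟨s, hs⟩ := hne
  rcases hsplit s hs with h | h
  · obtain ⟨m, hm, -, hbag⟩ := exists_le_subset_bag hN hwf hS hsplit (hN.inv_mem s hs) h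
    exact ⟨_, hbag⟩
  · obtain ⟨m, hm, -, hbag⟩ := exists_le_subset_bag hN hwf hS hsplit hs h
    exact ⟨_, hbag⟩

theorem bag_inter_subset_of_mem_support (hN : IsRegularTreeSet N) {X Y Z : Node N}
    (p : (decompTree N).Walk X Z) (hp : p.IsPath) (hY : Y ∈ p.support) :
    X.bag ∩ Z.bag ⊆ Y.bag := by
  classical
  rintro v ⟨hvX, hvZ⟩ u hu
  by_contra hvu
  have huN := Y.subset hu
  have hXY : ¬ (u ∈ X.1 ↔ u ∈ Y.1) := fun h => hvu (hvX u (h.2 hu))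
  have hYZ : ¬ (u ∈ Y.1 ↔ u ∈ Z.1) := fun h => hvu (hvZ u (h.1 hu))
  obtain ⟨a, ha⟩ :=
    Nat.not_even_iff_odd.1 (mt (even_count_treeEdge_iff hN huN (p.takeUntil Y hY)).1 hXY)
  obtain ⟨b, hb⟩ :=
    Nat.not_even_iff_odd.1 (mt (even_count_treeEdge_iff hN huN (p.dropUntil Y hY)).1 hYZ)
  have hle := hp.isTrail.count_edges_le_one (treeEdge hN huN)
  rw [← p.take_spec hY, SimpleGraph.Walk.edges_append, List.count_append] at hle
  omega

theorem biUnion_bag_eq (hN : IsRegularTreeSet N) (hwf : UpwardWellFounded N) (hu : u ∈ N)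
    {X Y : Node N} (hX : X.1 = orient N u) (hY : Y.1 = orient N u.inv) :
    ⋃ Z ∈ {Z : Node N | ∃ p : (decompTree N).Walk Z X, s(X, Y) ∉ p.edges}, Z.bag = u.B := by
  obtain rfl := Node.eq_of hu hX
  obtain rfl := Node.eq_of (hN.inv_mem u hu) hY
  classical
  rw [show s(Node.of hu, Node.of _) = treeEdge hN hu from Sym2.eq_swap]
  refine Set.Subset.antisymm (Set.iUnion₂_subset fun Z ⟨p, hp⟩ v hv => ?_) fun v hv => ?_
  · have hZ := (even_count_treeEdge_iff hN hu p).1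
      (by rw [List.count_eq_zero.2 hp]; exact Even.zero)
    exact hv u (hZ.2 (mem_orient_self hu))
  · obtain ⟨m, hm, hum, hvm⟩ := exists_le_subset_bag hN hwf (Set.singleton_nonempty v)
      (fun t _ => (t.mem_A_or_B v).imp Set.singleton_subset_iff.2 Set.singleton_subset_iff.2) hu
      (Set.singleton_subset_iff.2 hv)
    obtain ⟨p⟩ := decompTree_reachable hN hwf hm hu
    refine Set.mem_biUnion ⟨p.toPath, treeEdge_notMem_edges_of_isTrail hN hu
      p.toPath.2.isTrail ?_⟩ (hvm rfl)
    exact iff_of_true ⟨hu, Or.inl hum⟩ (mem_orient_self hu)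

theorem setOf_inducedSep_decompTree (hN : IsRegularTreeSet N) (hwf : UpwardWellFounded N) :
    {x | InducedSep (decompTree N) Node.bag x} = N := by
  ext x
  constructor
  · rintro ⟨X, Y, hXY, hA, hB⟩
    obtain ⟨w, hw, hX, hY⟩ := (decompTree_adj hN).1 hXY
    rw [biUnion_bag_eq hN hwf hw hX hY] at hA
    rw [Sym2.eq_swap, biUnion_bag_eq hN hwf (hN.inv_mem w hw) hY hX] at hB
    obtain rfl : x = w.inv := GraphSep.ext hA hB
    exact hN.inv_mem w hw
  · intro hx
    refine ⟨_, _, decompTree_adj_of hN (hN.inv_mem x hx), ?_, ?_⟩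
    · exact (biUnion_bag_eq hN hwf (hN.inv_mem x hx) rfl rfl).symm
    · rw [Sym2.eq_swap]
      exact (biUnion_bag_eq hN hwf hx rfl rfl).symm

theorem isTreeDecomposition_decompTree (hN : IsRegularTreeSet N) (hwf : UpwardWellFounded N)
    (hne : N.Nonempty) :
    IsTreeDecomposition G (decompTree N) Node.bag where
  isTree := isTree_decompTree hN hwf hne
  exists_mem v :=
    (exists_subset_bag hN hwf hne (Set.singleton_nonempty v) fun t _ =>
      (t.mem_A_or_B v).imp Set.singleton_subset_iff.2 Set.singleton_subset_iff.2).imp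
      fun _ h => h rfl
  exists_adj_mem v w hvw :=
    (exists_subset_bag hN hwf hne (Set.insert_nonempty v {w}) fun t _ =>
      pair_subset_A_or_B hvw t).imp fun _ h => ⟨h (.inl rfl), h (.inr rfl)⟩
  inter_subset_of_mem_support _ _ _ p hp h := bag_inter_subset_of_mem_support hN p hp h

theorem exists_isTreeDecomposition_setOf_inducedSep_eq (hN : IsRegularTreeSet N)
    (hwf : UpwardWellFounded N) :
    ∃ (ι : Type) (T : SimpleGraph ι) (𝒱 : ι → Set V),
      IsTreeDecomposition G T 𝒱 ∧ {x | InducedSep T 𝒱 x} = N := by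
  rcases N.eq_empty_or_nonempty with rfl | hne
  · exact ⟨Unit, ⊥, _, isTreeDecomposition_bot_univ G,
      Set.eq_empty_of_forall_notMem (not_inducedSep_bot _)⟩
  · exact ⟨_, _, _, isTreeDecomposition_decompTree hN hwf hne,
      setOf_inducedSep_decompTree hN hwf⟩

end GraphSep

open GraphSep in
theorem stmt6_general {V : Type} (G : SimpleGraph V) (N : Set (GraphSep G))
    (hinv : ∀ s ∈ N, s.inv ∈ N)
    (hnested : ∀ s ∈ N, ∀ t ∈ N, Nested s t)
    (hreg : ∀ s ∈ N, ¬ s.A ⊆ s.B ∧ ¬ s.B ⊆ s.A)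
    (hchain : ∀ f : ℕ → GraphSep G, (∀ i, f i ∈ N) →
      (∀ i, (f i).le (f (i + 1)) ∧ f i ≠ f (i + 1)) → (⋂ i, (f i).B) = ∅) :
    ∃ (ι : Type) (T : SimpleGraph ι) (_ : T.IsTree) (𝒱 : ι → Set V),
      (∀ v : V, ∃ t : ι, v ∈ 𝒱 t) ∧
      (∀ v w : V, G.Adj v w → ∃ t : ι, v ∈ 𝒱 t ∧ w ∈ 𝒱 t) ∧
      (∀ (t₁ t₂ t₃ : ι) (p : T.Walk t₁ t₃), p.IsPath → t₂ ∈ p.support →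
        𝒱 t₁ ∩ 𝒱 t₃ ⊆ 𝒱 t₂) ∧
      {x : GraphSep G | InducedSep T 𝒱 x} = N := by
  obtain ⟨ι, T, 𝒱, hT, hN⟩ := exists_isTreeDecomposition_setOf_inducedSep_eq
    ⟨hinv, hnested, hreg⟩ (upwardWellFounded_of_iInter_B_eq_empty hchain)
  exact ⟨ι, T, hT.isTree, 𝒱, hT.exists_mem, hT.exists_adj_mem,
    hT.inter_subset_of_mem_support, hN⟩

open GraphSep in
/-- a regular tree set of finite-order separations all of whose ω-chains
have empty intersection of the big sides induces a tree-decomposition. -/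
theorem stmt6 {V : Type} (G : SimpleGraph V) (N : Set (GraphSep G))
    (hfin : ∀ s ∈ N, s.order < ⊤)
    (hinv : ∀ s ∈ N, s.inv ∈ N)
    (hnested : ∀ s ∈ N, ∀ t ∈ N, Nested s t)
    (hreg : ∀ s ∈ N, ¬ s.A ⊆ s.B ∧ ¬ s.B ⊆ s.A)
    (hchain : ∀ f : ℕ → GraphSep G, (∀ i, f i ∈ N) →
      (∀ i, (f i).le (f (i + 1)) ∧ f i ≠ f (i + 1)) → (⋂ i, (f i).B) = ∅) :
    ∃ (ι : Type) (T : SimpleGraph ι) (_ : T.IsTree) (𝒱 : ι → Set V),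
      (∀ v : V, ∃ t : ι, v ∈ 𝒱 t) ∧
      (∀ v w : V, G.Adj v w → ∃ t : ι, v ∈ 𝒱 t ∧ w ∈ 𝒱 t) ∧
      (∀ (t₁ t₂ t₃ : ι) (p : T.Walk t₁ t₃), p.IsPath → t₂ ∈ p.support →
        𝒱 t₁ ∩ 𝒱 t₃ ⊆ 𝒱 t₂) ∧
      {x : GraphSep G | InducedSep T 𝒱 x} = N :=
  stmt6_general G N hinv hnested hreg hchain
end

section
/- Let G be a connected graph, X a finite set of vertices of G, and P a regular bounded k-profile of G with k ≥ |X|+1. Then there is a unique component C of G−X such that (V∖C, C∪X) ∈ P. -/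
/-!
If `P` pointed to no component of `G − X`, it would contain `(C ∪ X, V ∖ C)` for every
component `C`. Given finitely many `(A, B) ∈ P` with `⋂ (B ∖ A)` finite, joining them with these
separations for the finitely many components meeting `⋂ (B ∖ A)` or some `A ∩ B` keeps every
separator inside `X` and ends in a member of `P` of the form `(V, _)`, against regularity.
So the sets `B ∖ A` have infinite finite intersections, and a non-principal ultrafilter `U`
containing all of them yields the `ℵ₀`-profile `{(A, B) of finite order | B ∖ A ∈ U}`
extending `P`, against boundedness. Two distinct components cannot both be pointed to:
the join of their separations is `(V, X)`.
-/

open Filter Set SimpleGraph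

theorem Filter.exists_ultrafilter_le_cofinite_forall_mem {α ι : Type*} (f : ι → Set α)
    (hf : ∀ I : Set ι, I.Finite → (⋂ i ∈ I, f i).Infinite) :
    ∃ U : Ultrafilter α, (U : Filter α) ≤ cofinite ∧ ∀ i, f i ∈ U := by
  let F := (⨅ i, 𝓟 (f i)) ⊓ cofinite
  have : F.NeBot := by
    refine inf_neBot_iff_frequently_left.2 fun hp => ?_
    obtain ⟨I, hI, hIp⟩ := (hasBasis_iInf_principal_finite f).eventually_iff.1 hp
    exact frequently_cofinite_iff_infinite.2 ((hf I hI).mono hIp)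
  exact ⟨.of F, (Ultrafilter.of_le F).trans inf_le_right,
    fun i => Ultrafilter.of_le F (mem_inf_of_left (mem_iInf_of_mem i (mem_principal_self _)))⟩

namespace GraphSep

variable {V : Type} {G : SimpleGraph V} {X C D : Set V} {u v w : V}

@[simp] lemma inv_A (s : GraphSep G) : s.inv.A = s.B := rfl

@[simp] lemma inv_B (s : GraphSep G) : s.inv.B = s.A := rfl

@[simp] lemma join_A (s t : GraphSep G) : (s.join t).A = s.A ∪ t.A := rfl

@[simp] lemma join_B (s t : GraphSep G) : (s.join t).B = s.B ∩ t.B := rfl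

lemma order_inv (s : GraphSep G) : s.inv.order = s.order := by
  simp only [order, inv_A, inv_B, inter_comm]

lemma AvoidReach.refl (hv : v ∉ X) : AvoidReach G X v v := ⟨Walk.nil, by simpa using hv⟩

lemma AvoidReach.symm (h : AvoidReach G X v w) : AvoidReach G X w v := by
  obtain ⟨p, hp⟩ := h
  exact ⟨p.reverse, by simpa using hp⟩

lemma AvoidReach.trans (h : AvoidReach G X u v) (h' : AvoidReach G X v w) :
    AvoidReach G X u w := by
  obtain ⟨p, hp⟩ := h
  obtain ⟨q, hq⟩ := h'
  refine ⟨p.append q, fun x hx => ?_⟩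
  rcases List.mem_append.1 (Walk.support_append p q ▸ hx) with hx | hx
  · exact hp x hx
  · exact hq x (List.mem_of_mem_tail hx)

lemma exists_isCompOf_mem (hv : v ∉ X) : ∃ C, IsCompOf G X C ∧ v ∈ C :=
  ⟨_, ⟨v, hv, rfl⟩, AvoidReach.refl hv⟩

lemma IsCompOf.notMem (hC : IsCompOf G X C) (hv : v ∈ C) : v ∉ X := by
  obtain ⟨u, -, rfl⟩ := hC
  obtain ⟨p, hp⟩ := hv
  exact hp v p.end_mem_support

lemma IsCompOf.eq_setOf_of_mem (hC : IsCompOf G X C) (hv : v ∈ C) :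
    C = {w | AvoidReach G X v w} := by
  obtain ⟨u, -, rfl⟩ := hC
  ext w
  exact ⟨fun hw => AvoidReach.trans (AvoidReach.symm hv) hw, fun hw => AvoidReach.trans hv hw⟩

lemma IsCompOf.eq_of_mem_of_mem (hC : IsCompOf G X C) (hD : IsCompOf G X D) (hvC : v ∈ C)
    (hvD : v ∈ D) : C = D := by
  rw [hC.eq_setOf_of_mem hvC, hD.eq_setOf_of_mem hvD]

lemma IsCompOf.mem_of_adj (hC : IsCompOf G X C) (hv : v ∈ C) (hadj : G.Adj v w) (hw : w ∉ X) :
    w ∈ C := by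
  rw [hC.eq_setOf_of_mem hv]
  exact ⟨Walk.cons hadj Walk.nil, by simp [hC.notMem hv, hw]⟩

lemma finite_setOf_isCompOf_inter_nonempty {W : Set V} (hW : W.Finite) :
    {C | IsCompOf G X C ∧ (C ∩ W).Nonempty}.Finite :=
  (hW.image fun v => {w | AvoidReach G X v w}).subset <| by
    rintro C ⟨hC, v, hvC, hvW⟩
    exact ⟨v, hvW, (hC.eq_setOf_of_mem hvC).symm⟩

def compSep (X C : Set V) (hC : IsCompOf G X C) : GraphSep G where
  A := Cᶜ
  B := C ∪ X
  union_eq := by rw [← union_assoc, compl_union_self, univ_union]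
  no_edge := fun _ ha _ hb hadj =>
    ha.1 (hC.mem_of_adj (not_not.1 hb.2) hadj.symm fun haX => ha.2 (Or.inr haX))

@[simp] lemma compSep_A (hC : IsCompOf G X C) : (compSep X C hC).A = Cᶜ := rfl

@[simp] lemma compSep_B (hC : IsCompOf G X C) : (compSep X C hC).B = C ∪ X := rfl

lemma order_compSep (hC : IsCompOf G X C) : (compSep X C hC).order = X.encard := by
  refine congrArg encard (Set.ext fun x => ⟨?_, fun hx => ⟨(hC.notMem · hx), .inr hx⟩⟩)
  rintro ⟨hxC, hxC' | hxX⟩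
  exacts [absurd hxC' hxC, hxX]

variable {k : ℕ∞} {P : Set (GraphSep G)} {s t : GraphSep G}

lemma order_lt_of_inter_subset {Y : Set V} (h : s.A ∩ s.B ⊆ Y) (hY : Y.encard < k) :
    s.order < k :=
  (encard_le_encard h).trans_lt hY

lemma IsProfile.finite_inter (hP : IsProfile k P) (hs : s ∈ P) : (s.A ∩ s.B).Finite :=
  encard_lt_top_iff.1 ((hP.1.1 s hs).trans_le le_top)

lemma IsProfile.join_mem (hP : IsProfile k P) (hs : s ∈ P) (ht : t ∈ P)
    (h : (s.join t).order < k) : s.join t ∈ P :=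
  (hP.1.2.1 _ h).resolve_right (hP.2.2 s hs t ht)

lemma IsProfile.mem_of_B_eq_univ (hP : IsProfile k P) (hreg : RegularP P) (hs : s.order < k)
    (hB : s.B = univ) : s ∈ P :=
  (hP.1.2.1 s hs).resolve_right fun h => hreg _ h hB

lemma IsProfile.exists_mem_join_iUnion {ι : Type*} (hP : IsProfile k P) {u : GraphSep G}
    (hu : u ∈ P) {f : ι → GraphSep G} {I : Set ι} (hI : I.Finite) (hIP : ∀ i ∈ I, f i ∈ P)
    {Y : Set V} (hY : Y.encard < k)
    (hsep : ∀ J ⊆ I, (u.A ∪ ⋃ i ∈ J, (f i).A) ∩ (u.B ∩ ⋂ i ∈ J, (f i).B) ⊆ Y) :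
    ∃ m ∈ P, m.A = u.A ∪ ⋃ i ∈ I, (f i).A ∧ m.B = u.B ∩ ⋂ i ∈ I, (f i).B := by
  induction I, hI using Set.Finite.induction_on with
  | empty => exact ⟨u, hu, by simp, by simp⟩
  | @insert i J _ _ ih =>
    obtain ⟨m, hm, hmA, hmB⟩ := ih (fun j hj => hIP j (mem_insert_of_mem i hj))
      (fun J' hJ' => hsep J' (hJ'.trans (subset_insert i J)))
    have hA : (m.join (f i)).A = u.A ∪ ⋃ j ∈ insert i J, (f j).A := by
      rw [join_A, hmA, biUnion_insert, union_comm (f i).A, union_assoc]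
    have hB : (m.join (f i)).B = u.B ∩ ⋂ j ∈ insert i J, (f j).B := by
      rw [join_B, hmB, biInter_insert, inter_comm (f i).B, inter_assoc]
    refine ⟨_, hP.join_mem hm (hIP i (mem_insert i J)) (order_lt_of_inter_subset ?_ hY), hA, hB⟩
    rw [hA, hB]
    exact hsep _ subset_rfl

def ultrafilterProfile (G : SimpleGraph V) (U : Ultrafilter V) : Set (GraphSep G) :=
  {s | s.order < ⊤ ∧ s.B \ s.A ∈ U}

lemma isProfile_ultrafilterProfile {U : Ultrafilter V} (hU : (U : Filter V) ≤ cofinite) :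
    IsProfile ⊤ (ultrafilterProfile G U) := by
  have meet : ∀ {a b : Set V}, a ∈ U → b ∈ U → ∃ x, x ∈ a ∧ x ∈ b := fun ha hb =>
    Ultrafilter.nonempty_of_mem (inter_mem ha hb)
  refine ⟨⟨fun s hs => hs.1, fun s hs => ?_, fun s hs hinv => ?_⟩,
    fun r hr s hs hle => ?_, fun s hs t ht hst => ?_⟩
  · have hsep : (s.A ∩ s.B)ᶜ ∈ U := hU (mem_cofinite.2 (by simpa using encard_lt_top_iff.1 hs))
    have hcover : (s.A ∩ s.B)ᶜ ⊆ (s.B \ s.A) ∪ (s.A \ s.B) := fun x hx => by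
      by_cases hA : x ∈ s.A
      exacts [.inr ⟨hA, fun hB => hx ⟨hA, hB⟩⟩, .inl ⟨(s.mem_A_or_B x).resolve_left hA, hA⟩]
    rcases Ultrafilter.union_mem_iff.1 (mem_of_superset hsep hcover) with h | h
    · exact .inl ⟨hs, h⟩
    · exact .inr ⟨by rwa [order_inv], h⟩
  · obtain ⟨x, hx, hx'⟩ := meet hs.2 hinv.2
    exact absurd hx'.1 hx.2
  · obtain ⟨x, hx, hx'⟩ := meet hr.2 hs.2
    exact absurd (hle.1 hx.1) hx'.2
  · obtain ⟨x, hx, hx', hx''⟩ := meet hs.2 (inter_mem ht.2 hst.2)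
    exact hx''.1.elim hx.2 hx'.2

lemma IsProfile.exists_mem_A_eq_union_biUnion (hP : IsProfile k P) (hreg : RegularP P)
    (hXk : X.encard < k) (hall : ∀ C (hC : IsCompOf G X C), (compSep X C hC).inv ∈ P)
    {F : Set {C // IsCompOf G X C}} (hF : F.Finite) :
    ∃ m ∈ P, m.A = X ∪ ⋃ C ∈ F, C.1 ∧ m.B = (⋃ C ∈ F, C.1)ᶜ := by
  let base : GraphSep G := ⟨X, univ, union_univ X, by simp⟩
  obtain ⟨m, hm, hmA, hmB⟩ := hP.exists_mem_join_iUnion (u := base)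
    (hP.mem_of_B_eq_univ hreg (order_lt_of_inter_subset inter_subset_left hXk) rfl)
    hF (fun C _ => hall C.1 C.2) hXk <| by
      rintro J - x ⟨hxX | hxA, -, hxB⟩
      · exact hxX
      · obtain ⟨C, hCJ, hxC | hxX⟩ := mem_iUnion₂.1 hxA
        exacts [absurd hxC (mem_iInter₂.1 hxB C hCJ), hxX]
  refine ⟨m, hm, hmA.trans ?_, hmB.trans ?_⟩
  · ext x
    simp only [base, inv_A, compSep_B, mem_union, mem_iUnion, exists_prop]
    tauto
  · simp [base]

lemma IsProfile.infinite_biInter_diff (hP : IsProfile k P) (hreg : RegularP P)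
    (hXk : X.encard < k) (hall : ∀ C (hC : IsCompOf G X C), (compSep X C hC).inv ∈ P)
    {S : Set (GraphSep G)} (hS : S.Finite) (hSP : S ⊆ P) :
    (⋂ s ∈ S, s.B \ s.A).Infinite := by
  intro hR
  set W := (⋂ s ∈ S, s.B \ s.A) ∪ ⋃ s ∈ S, s.A ∩ s.B
  set F : Set {C // IsCompOf G X C} := {C | (C.1 ∩ W).Nonempty}
  have hF : F.Finite := ((finite_setOf_isCompOf_inter_nonempty (G := G) (X := X)
    (hR.union (hS.biUnion fun s hs => hP.finite_inter (hSP hs)))).preimage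
    Subtype.val_injective.injOn).subset fun C hC => ⟨C.2, hC⟩
  obtain ⟨m, hm, hmA, hmB⟩ := hP.exists_mem_A_eq_union_biUnion hreg hXk hall hF
  obtain ⟨n, hn, hnA, -⟩ := hP.exists_mem_join_iUnion (f := id) hm hS hSP hXk <| by
    rintro J hJ x ⟨hxm | hxs, hxmB, hxB⟩
    · rw [hmA] at hxm
      rw [hmB] at hxmB
      exact hxm.resolve_right hxmB
    -- a vertex of a separator in `S` lies in a component of `F`, and these avoid `m.B`
    by_contra hxX
    obtain ⟨C, hC, hxC⟩ := exists_isCompOf_mem (G := G) hxX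
    obtain ⟨s, hs, hxs⟩ := mem_iUnion₂.1 hxs
    have hCF : ⟨C, hC⟩ ∈ F :=
      ⟨x, hxC, .inr (mem_biUnion (hJ hs) ⟨hxs, mem_iInter₂.1 hxB s hs⟩)⟩
    rw [hmB] at hxmB
    exact hxmB (mem_biUnion hCF hxC)
  refine hreg n hn (eq_univ_of_forall fun v => ?_)
  rw [hnA, hmA]
  by_cases hvX : v ∈ X
  · exact .inl (.inl hvX)
  by_cases hvR : v ∈ ⋂ s ∈ S, s.B \ s.A
  · obtain ⟨C, hC, hvC⟩ := exists_isCompOf_mem (G := G) hvX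
    have hCF : ⟨C, hC⟩ ∈ F := ⟨v, hvC, .inl hvR⟩
    exact .inl (.inr (mem_biUnion hCF hvC))
  · obtain ⟨s, hs, hvs⟩ : ∃ s ∈ S, v ∉ s.B \ s.A := by simpa using hvR
    refine .inr (mem_biUnion hs ?_)
    exact (s.mem_A_or_B v).elim id fun hvB => by_contra fun hvA => hvs ⟨hvB, hvA⟩

lemma IsProfile.exists_isCompOf_sep_mem (hP : IsProfile k P) (hreg : RegularP P)
    (hbdd : BoundedP P) (hXk : X.encard < k) :
    ∃ C, IsCompOf G X C ∧ ∃ s ∈ P, s.A = Cᶜ ∧ s.B = C ∪ X := by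
  by_contra hnone
  have hall : ∀ C (hC : IsCompOf G X C), (compSep X C hC).inv ∈ P := fun C hC =>
    (hP.1.2.1 _ ((order_compSep hC).trans_lt hXk)).resolve_left
      fun h => hnone ⟨C, hC, _, h, rfl, rfl⟩
  obtain ⟨U, hU, hPU⟩ := exists_ultrafilter_le_cofinite_forall_mem
    (fun s : P => s.1.B \ s.1.A) fun I hI => by
      simpa only [biInter_image] using hP.infinite_biInter_diff hreg hXk hall
        (hI.image Subtype.val) (by rintro _ ⟨s, -, rfl⟩; exact s.2)
  exact hbdd.2 _ (isProfile_ultrafilterProfile hU)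
    fun s hs => ⟨(hP.1.1 s hs).trans_le le_top, hPU ⟨s, hs⟩⟩

lemma IsCompOf.eq_of_sep_mem (hP : IsProfile k P) (hreg : RegularP P) (hXk : X.encard < k)
    (hC : IsCompOf G X C) (hD : IsCompOf G X D) (hs : s ∈ P) (hsA : s.A = Cᶜ)
    (hsB : s.B = C ∪ X) (ht : t ∈ P) (htA : t.A = Dᶜ) (htB : t.B = D ∪ X) : C = D := by
  by_contra hne
  have hdisj : ∀ x ∈ C, x ∉ D := fun x hxC hxD => hne (hC.eq_of_mem_of_mem hD hxC hxD)
  have hsep : (s.join t).A ∩ (s.join t).B ⊆ X := by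
    rintro x ⟨-, hxs, hxt⟩
    rw [hsB] at hxs
    rw [htB] at hxt
    rcases hxs with hxC | hxX
    exacts [hxt.resolve_left (hdisj x hxC), hxX]
  refine hreg _ (hP.join_mem hs ht (order_lt_of_inter_subset hsep hXk)) ?_
  refine eq_univ_of_forall fun x => ?_
  rw [join_A, hsA, htA]
  by_cases hxC : x ∈ C
  exacts [.inr (hdisj x hxC), .inl hxC]

end GraphSep

open GraphSep in
theorem stmt7_general {V : Type} (G : SimpleGraph V)
    (X : Set V)
    (k : ℕ) (P : Set (GraphSep G))
    (hP : IsProfile (k : ℕ∞) P) (hreg : RegularP P) (hbdd : BoundedP P)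
    (hk : X.encard + 1 ≤ (k : ℕ∞)) :
    ∃! C : Set V, IsCompOf G X C ∧ ∃ s ∈ P, s.A = Cᶜ ∧ s.B = C ∪ X := by
  have hXk : X.encard < k := ENat.add_one_le_natCast_iff.1 hk
  obtain ⟨C, hC, s, hs, hsA, hsB⟩ := hP.exists_isCompOf_sep_mem hreg hbdd hXk
  exact ⟨C, ⟨hC, s, hs, hsA, hsB⟩, fun D ⟨hD, t, ht, htA, htB⟩ =>
    (hC.eq_of_sep_mem hP hreg hXk hD hs hsA hsB ht htA htB).symm⟩

open GraphSep in
/-- a regular bounded `k`-profile with `k ≥ |X|+1` points towards a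
unique component of `G − X`. -/
theorem stmt7 {V : Type} (G : SimpleGraph V) (hG : G.Connected)
    (X : Set V) (hX : X.Finite)
    (k : ℕ) (P : Set (GraphSep G))
    (hP : IsProfile (k : ℕ∞) P) (hreg : RegularP P) (hbdd : BoundedP P)
    (hk : X.encard + 1 ≤ (k : ℕ∞)) :
    ∃! C : Set V, IsCompOf G X C ∧ ∃ s ∈ P, s.A = Cᶜ ∧ s.B = C ∪ X :=
  stmt7_general G X k P hP hreg hbdd hk
end
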